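/- arXiv:2104.03377 — 6 statements merged into one kernel-verified Lean document; each statement's English description precedes it below -/
import Mathlib

section
/- Let E be a vector lattice and let F be a vector sublattice of E (a linear subspace closed under the lattice operations of E). If E is prime Noetherian, then F, regarded as a vector lattice with the induced order, is prime Noetherian. -/
/-- An (order) ideal of the vector lattice `E`: a solid linear subspace. -/
def IsIdeal {E : Type*} [Lattice E] [AddCommGroup E] [Module ℝ E]
    (I : Submodule ℝ E) : Prop :=
  ∀ x y : E, |x| ≤ |y| → y ∈ I → x ∈ I

/-- A prime ideal: a proper ideal `P` such that `x ⊓ y ∈ P` implies `x ∈ P` or `y ∈ P`. -/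
def IsPrimeIdeal {E : Type*} [Lattice E] [AddCommGroup E] [Module ℝ E]
    (P : Submodule ℝ E) : Prop :=
  IsIdeal P ∧ P ≠ ⊤ ∧ ∀ x y : E, x ⊓ y ∈ P → x ∈ P ∨ y ∈ P

/-- A principal ideal: `I = {y : |y| ≤ c • x for some scalar c ≥ 0}` for some `x ≥ 0`. -/
def IsPrincipalIdeal {E : Type*} [Lattice E] [AddCommGroup E] [Module ℝ E]
    (I : Submodule ℝ E) : Prop :=
  ∃ x : E, 0 ≤ x ∧ ∀ y : E, y ∈ I ↔ ∃ c : ℝ, 0 ≤ c ∧ |y| ≤ c • x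

/-- A maximal ideal: a proper ideal `M` such that any ideal between `M` and `E` equals `M` or `E`. -/
def IsMaximalIdeal {E : Type*} [Lattice E] [AddCommGroup E] [Module ℝ E]
    (M : Submodule ℝ E) : Prop :=
  IsIdeal M ∧ M ≠ ⊤ ∧ ∀ J : Submodule ℝ E, IsIdeal J → M ≤ J → J = M ∨ J = ⊤

/-- An ideal `I` is order dense if its disjoint complement is trivial. -/
def IsOrderDense {E : Type*} [Lattice E] [AddCommGroup E] [Module ℝ E]
    (I : Submodule ℝ E) : Prop :=
  ∀ x : E, (∀ y ∈ I, |x| ⊓ |y| = 0) → x = 0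

/-- `a` is an atom of the vector lattice `E`. -/
def IsAtomElem {E : Type*} [Lattice E] [AddCommGroup E] (a : E) : Prop :=
  0 < a ∧ ∀ x y : E, 0 ≤ x → x ≤ a → 0 ≤ y → y ≤ a → x ⊓ y = 0 → x = 0 ∨ y = 0

/-- The vector lattice `E` is Archimedean. -/
def VLArchimedean (E : Type*) [Lattice E] [AddCommGroup E] : Prop :=
  ∀ x y : E, (∀ n : ℕ, n • x ≤ y) → x ≤ 0

/-- The vector lattice `E` is uniformly complete. -/
def UniformlyComplete (E : Type*) [Lattice E] [AddCommGroup E] [Module ℝ E] : Prop :=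
  ∀ e : E, 0 ≤ e → ∀ x : ℕ → E,
    (∀ ε : ℝ, 0 < ε → ∃ N : ℕ, ∀ m n : ℕ, N ≤ m → N ≤ n → |x m - x n| ≤ ε • e) →
    ∃ l : E, ∀ ε : ℝ, 0 < ε → ∃ N : ℕ, ∀ n : ℕ, N ≤ n → |x n - l| ≤ ε • e

/-- The vector lattice `E` has a strong unit. -/
def HasStrongUnit (E : Type*) [Lattice E] [AddCommGroup E] [Module ℝ E] : Prop :=
  ∃ e : E, 0 ≤ e ∧ ∀ x : E, ∃ c : ℝ, 0 < c ∧ |x| ≤ c • e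

/-- The vector lattice `E` is prime Noetherian: every increasing sequence of
prime ideals is eventually constant. -/
def PrimeNoetherian (E : Type*) [Lattice E] [AddCommGroup E] [Module ℝ E] : Prop :=
  ∀ P : ℕ → Submodule ℝ E, (∀ n, IsPrimeIdeal (P n)) → Monotone P →
    ∃ N : ℕ, ∀ n : ℕ, N ≤ n → P n = P N


/-- An ideal of the vector sublattice of `E` whose underlying set is `S`. -/
def IsIdealOn {E : Type*} [Lattice E] [AddCommGroup E] [Module ℝ E]
    (S : Set E) (I : Submodule ℝ E) : Prop :=
  (I : Set E) ⊆ S ∧ ∀ x y : E, x ∈ S → |x| ≤ |y| → y ∈ I → x ∈ I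

/-- A prime ideal of the vector sublattice of `E` whose underlying set is `S`. -/
def IsPrimeIdealOn {E : Type*} [Lattice E] [AddCommGroup E] [Module ℝ E]
    (S : Set E) (P : Submodule ℝ E) : Prop :=
  IsIdealOn S P ∧ (P : Set E) ≠ S ∧ ∀ x ∈ S, ∀ y ∈ S, x ⊓ y ∈ P → x ∈ P ∨ y ∈ P

/-- The vector sublattice of `E` with underlying set `S` is prime Noetherian. -/
def PrimeNoetherianOn {E : Type*} [Lattice E] [AddCommGroup E] [Module ℝ E]
    (S : Set E) : Prop :=
  ∀ P : ℕ → Submodule ℝ E, (∀ n, IsPrimeIdealOn S (P n)) → Monotone P →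
    ∃ N : ℕ, ∀ n : ℕ, N ≤ n → P n = P N


section VLAux

variable {E : Type*} [Lattice E] [AddCommGroup E] [Module ℝ E]
  [CovariantClass E E (· + ·) (· ≤ ·)] [PosSMulMono ℝ E]

private lemma vl_smul_mono_scalar {c₁ c₂ : ℝ} {x : E} (h : c₁ ≤ c₂) (hx : 0 ≤ x) :
    c₁ • x ≤ c₂ • x := by
  have h0 : 0 ≤ (c₂ - c₁) • x := smul_nonneg (by linarith) hx
  have : c₁ • x + (c₂ - c₁) • x = c₂ • x := by
    rw [← add_smul]; congr 1; ring
  calc c₁ • x ≤ c₁ • x + (c₂ - c₁) • x := le_add_of_nonneg_right h0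
    _ = c₂ • x := this

private lemma vl_abs_smul_le (c : ℝ) (x : E) : |c • x| ≤ |c| • |x| := by
  rcases le_total 0 c with hc | hc
  · rw [abs_of_nonneg hc]
    refine abs_le'.2 ⟨smul_le_smul_of_nonneg_left (le_abs_self x) hc, ?_⟩
    rw [← smul_neg]
    exact smul_le_smul_of_nonneg_left (neg_le_abs x) hc
  · rw [abs_of_nonpos hc]
    refine abs_le'.2 ⟨?_, ?_⟩
    · have h1 : c • x = (-c) • (-x) := by rw [smul_neg, neg_smul, neg_neg]
      rw [h1]
      exact smul_le_smul_of_nonneg_left (neg_le_abs x) (by linarith)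
    · have h1 : -(c • x) = (-c) • x := by rw [neg_smul]
      rw [h1]
      exact smul_le_smul_of_nonneg_left (le_abs_self x) (by linarith)

private lemma vl_smul_inf {c : ℝ} (hc : 0 ≤ c) (x y : E) :
    c • (x ⊓ y) = c • x ⊓ c • y := by
  rcases eq_or_lt_of_le hc with rfl | hc'
  · simp
  · refine le_antisymm (le_inf (smul_le_smul_of_nonneg_left inf_le_left hc)
      (smul_le_smul_of_nonneg_left inf_le_right hc)) ?_
    have hinv : (0:ℝ) ≤ c⁻¹ := by positivity
    have h1 : c⁻¹ • (c • x ⊓ c • y) ≤ x ⊓ y := by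
      refine le_inf ?_ ?_
      · calc c⁻¹ • (c • x ⊓ c • y) ≤ c⁻¹ • (c • x) :=
              smul_le_smul_of_nonneg_left inf_le_left hinv
          _ = x := inv_smul_smul₀ hc'.ne' x
      · calc c⁻¹ • (c • x ⊓ c • y) ≤ c⁻¹ • (c • y) :=
              smul_le_smul_of_nonneg_left inf_le_right hinv
          _ = y := inv_smul_smul₀ hc'.ne' y
    calc c • x ⊓ c • y = c • (c⁻¹ • (c • x ⊓ c • y)) := (smul_inv_smul₀ hc'.ne' _).symm
      _ ≤ c • (x ⊓ y) := smul_le_smul_of_nonneg_left h1 hc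

end VLAux

private lemma vl_exists_prime_ext {E : Type*} [Lattice E] [AddCommGroup E] [Module ℝ E]
    [CovariantClass E E (· + ·) (· ≤ ·)] [PosSMulMono ℝ E]
    (F : Submodule ℝ E) (hsub : ∀ x y : E, x ∈ F → y ∈ F → x ⊔ y ∈ F)
    (Q : Submodule ℝ E) (hQ : IsPrimeIdealOn (F : Set E) Q)
    (P0 : Submodule ℝ E) (hP0 : IsIdeal P0) (hP0F : ∀ x ∈ P0, x ∈ F → x ∈ Q) :
    ∃ P : Submodule ℝ E, IsPrimeIdeal P ∧ P0 ≤ P ∧ Q ≤ P ∧ ∀ x ∈ P, x ∈ F → x ∈ Q := by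
  classical
  obtain ⟨⟨hQF, hQsolid⟩, hQne, hQprime⟩ := hQ
  have hFabs : ∀ x : E, x ∈ F → |x| ∈ F := fun x hx => hsub x (-x) hx (F.neg_mem hx)
  have hFinf : ∀ x y : E, x ∈ F → y ∈ F → x ⊓ y ∈ F := by
    intro x y hx hy
    have h : x ⊓ y = -(-x ⊔ -y) := by rw [neg_sup, neg_neg, neg_neg]
    rw [h]; exact F.neg_mem (hsub _ _ (F.neg_mem hx) (F.neg_mem hy))
  have hQabs : ∀ x : E, x ∈ Q → |x| ∈ Q := fun x hx =>
    hQsolid |x| x (hFabs x (hQF hx)) (by rw [abs_abs]) hx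
  have hQofabs : ∀ x : E, x ∈ F → |x| ∈ Q → x ∈ Q := fun x hxF h =>
    hQsolid x |x| hxF (by rw [abs_abs]) h
  have hP0abs : ∀ x : E, x ∈ P0 → |x| ∈ P0 := fun x hx => hP0 |x| x (by rw [abs_abs]) hx
  set M : Set E := {m | m ∈ F ∧ 0 ≤ m ∧ m ∉ Q} with hMdef
  set 𝒮 : Set (Submodule ℝ E) :=
    {I | IsIdeal I ∧ P0 ≤ I ∧ Q ≤ I ∧ ∀ m ∈ M, m ∉ I} with h𝒮def
  -- the ideal generated by `P0` and `Q`
  let J : Submodule ℝ E :=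
    { carrier := {z | ∃ p ∈ P0, ∃ q ∈ Q, 0 ≤ p ∧ 0 ≤ q ∧ |z| ≤ p + q}
      zero_mem' := ⟨0, P0.zero_mem, 0, Q.zero_mem, le_rfl, le_rfl, by simp⟩
      add_mem' := by
        rintro a b ⟨p1, hp1, q1, hq1, hp1n, hq1n, h1⟩ ⟨p2, hp2, q2, hq2, hp2n, hq2n, h2⟩
        refine ⟨p1 + p2, P0.add_mem hp1 hp2, q1 + q2, Q.add_mem hq1 hq2,
          add_nonneg hp1n hp2n, add_nonneg hq1n hq2n, ?_⟩
        calc |a + b| ≤ |a| + |b| := abs_add_le a b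
          _ ≤ (p1 + q1) + (p2 + q2) := add_le_add h1 h2
          _ = (p1 + p2) + (q1 + q2) := by abel
      smul_mem' := by
        rintro c a ⟨p, hp, q, hq, hpn, hqn, h⟩
        refine ⟨|c| • p, P0.smul_mem _ hp, |c| • q, Q.smul_mem _ hq,
          smul_nonneg (abs_nonneg c) hpn, smul_nonneg (abs_nonneg c) hqn, ?_⟩
        calc |c • a| ≤ |c| • |a| := vl_abs_smul_le c a
          _ ≤ |c| • (p + q) := smul_le_smul_of_nonneg_left h (abs_nonneg c)
          _ = |c| • p + |c| • q := smul_add _ _ _ }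
  have hmemJ : ∀ z : E, z ∈ J ↔ ∃ p ∈ P0, ∃ q ∈ Q, 0 ≤ p ∧ 0 ≤ q ∧ |z| ≤ p + q :=
    fun z => Iff.rfl
  have hJ𝒮 : J ∈ 𝒮 := by
    refine ⟨?_, ?_, ?_, ?_⟩
    · intro a b hab hb
      obtain ⟨p, hp, q, hq, hpn, hqn, h⟩ := (hmemJ b).1 hb
      exact (hmemJ a).2 ⟨p, hp, q, hq, hpn, hqn, hab.trans h⟩
    · intro p hp
      exact (hmemJ p).2 ⟨|p|, hP0abs p hp, 0, Q.zero_mem, abs_nonneg p, le_rfl, by simp⟩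
    · intro q hq
      exact (hmemJ q).2 ⟨0, P0.zero_mem, |q|, hQabs q hq, le_rfl, abs_nonneg q, by simp⟩
    · rintro m ⟨hmF, hmn, hmQ⟩ hmJ
      obtain ⟨p, hp, q, hq, hpn, hqn, hle⟩ := (hmemJ m).1 hmJ
      rw [abs_of_nonneg hmn] at hle
      have hqF : q ∈ F := hQF hq
      have h1 : m - q ≤ p := sub_le_iff_le_add.2 hle
      have h2 : (m - q) ⊔ 0 ≤ p := sup_le h1 hpn
      have h3 : (m - q) ⊔ 0 ∈ F := hsub _ 0 (F.sub_mem hmF hqF) F.zero_mem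
      have h4 : (m - q) ⊔ 0 ∈ P0 := by
        refine hP0 _ p ?_ hp
        rw [abs_of_nonneg le_sup_right]
        exact h2.trans (le_abs_self p)
      have h5 : (m - q) ⊔ 0 ∈ Q := hP0F _ h4 h3
      have h6 : m ≤ ((m - q) ⊔ 0) + q := by
        have : m - q ≤ (m - q) ⊔ 0 := le_sup_left
        exact sub_le_iff_le_add.1 this
      have h7 : ((m - q) ⊔ 0) + q ∈ Q := Q.add_mem h5 hq
      refine hmQ (hQsolid m _ hmF ?_ h7)
      rw [abs_of_nonneg hmn]
      exact h6.trans (le_abs_self _)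
  have hzorn : ∀ c ⊆ 𝒮, IsChain (· ≤ ·) c → ∀ y ∈ c, ∃ ub ∈ 𝒮, ∀ z ∈ c, z ≤ ub := by
    intro c hc𝒮 hchain y hyc
    let U : Submodule ℝ E :=
      { carrier := {x | ∃ I ∈ c, x ∈ I}
        zero_mem' := ⟨y, hyc, y.zero_mem⟩
        add_mem' := by
          rintro a b ⟨I, hIc, haI⟩ ⟨K, hKc, hbK⟩
          rcases hchain.total hIc hKc with h | h
          · exact ⟨K, hKc, K.add_mem (h haI) hbK⟩
          · exact ⟨I, hIc, I.add_mem haI (h hbK)⟩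
        smul_mem' := by
          rintro r a ⟨I, hIc, haI⟩
          exact ⟨I, hIc, I.smul_mem r haI⟩ }
    have hmemU : ∀ z : E, z ∈ U ↔ ∃ I ∈ c, z ∈ I := fun z => Iff.rfl
    refine ⟨U, ⟨?_, ?_, ?_, ?_⟩, fun z hz x hx => (hmemU x).2 ⟨z, hz, hx⟩⟩
    · intro a b hab hb
      obtain ⟨I, hIc, hbI⟩ := (hmemU b).1 hb
      exact (hmemU a).2 ⟨I, hIc, (hc𝒮 hIc).1 a b hab hbI⟩
    · intro x hx
      exact (hmemU x).2 ⟨y, hyc, (hc𝒮 hyc).2.1 hx⟩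
    · intro x hx
      exact (hmemU x).2 ⟨y, hyc, (hc𝒮 hyc).2.2.1 hx⟩
    · intro m hmM hmU
      obtain ⟨I, hIc, hmI⟩ := (hmemU m).1 hmU
      exact (hc𝒮 hIc).2.2.2 m hmM hmI
  obtain ⟨P, hJP, hPmax⟩ := zorn_le_nonempty₀ 𝒮 hzorn J hJ𝒮
  obtain ⟨hPid, hPP0, hPQ, hPM⟩ := hPmax.1
  have hPabs : ∀ z : E, z ∈ P → |z| ∈ P := fun z hz => hPid |z| z (by rw [abs_abs]) hz
  have hMne : ∃ m, m ∈ M := by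
    have hss : (Q : Set E) ⊂ (F : Set E) := (HasSubset.Subset.ssubset_of_ne hQF hQne)
    obtain ⟨f, hfF, hfQ⟩ := Set.exists_of_ssubset hss
    exact ⟨|f|, hFabs f hfF, abs_nonneg f, fun h => hfQ (hQofabs f hfF h)⟩
  have hPne : P ≠ ⊤ := by
    intro h
    obtain ⟨m, hm⟩ := hMne
    exact hPM m hm (h ▸ Submodule.mem_top)
  -- extension step
  have hext : ∀ w : E, 0 ≤ w → w ∉ P →
      ∃ m ∈ M, ∃ p ∈ P, 0 ≤ p ∧ ∃ c : ℝ, 0 ≤ c ∧ m ≤ p + c • w := by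
    intro w hw hwP
    let Pw : Submodule ℝ E :=
      { carrier := {z | ∃ p ∈ P, 0 ≤ p ∧ ∃ c : ℝ, 0 ≤ c ∧ |z| ≤ p + c • w}
        zero_mem' := ⟨0, P.zero_mem, le_rfl, 0, le_rfl, by simp⟩
        add_mem' := by
          rintro a b ⟨p1, hp1, hp1n, c1, hc1, h1⟩ ⟨p2, hp2, hp2n, c2, hc2, h2⟩
          refine ⟨p1 + p2, P.add_mem hp1 hp2, add_nonneg hp1n hp2n, c1 + c2,
            by linarith, ?_⟩
          calc |a + b| ≤ |a| + |b| := abs_add_le a b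
            _ ≤ (p1 + c1 • w) + (p2 + c2 • w) := add_le_add h1 h2
            _ = (p1 + p2) + (c1 + c2) • w := by rw [add_smul]; abel
        smul_mem' := by
          rintro r a ⟨p, hp, hpn, c, hc, h⟩
          refine ⟨|r| • p, P.smul_mem _ hp, smul_nonneg (abs_nonneg r) hpn, |r| * c,
            mul_nonneg (abs_nonneg r) hc, ?_⟩
          calc |r • a| ≤ |r| • |a| := vl_abs_smul_le r a
            _ ≤ |r| • (p + c • w) := smul_le_smul_of_nonneg_left h (abs_nonneg r)
            _ = |r| • p + (|r| * c) • w := by rw [smul_add, mul_smul] }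
    have hmemPw : ∀ z : E, z ∈ Pw ↔ ∃ p ∈ P, 0 ≤ p ∧ ∃ c : ℝ, 0 ≤ c ∧ |z| ≤ p + c • w :=
      fun z => Iff.rfl
    have hPPw : P ≤ Pw := fun z hz =>
      (hmemPw z).2 ⟨|z|, hPabs z hz, abs_nonneg z, 0, le_rfl, by simp⟩
    have hwPw : w ∈ Pw := (hmemPw w).2
      ⟨0, P.zero_mem, le_rfl, 1, zero_le_one, by rw [abs_of_nonneg hw]; simp⟩
    rcases Classical.em (∃ m ∈ M, m ∈ Pw) with ⟨m, hmM, hmPw⟩ | hno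
    · obtain ⟨p, hp, hpn, cc, hcc, h⟩ := (hmemPw m).1 hmPw
      exact ⟨m, hmM, p, hp, hpn, cc, hcc, by rwa [abs_of_nonneg hmM.2.1] at h⟩
    · exfalso
      have hPw𝒮 : Pw ∈ 𝒮 := by
        refine ⟨?_, fun z hz => hPPw (hPP0 hz), fun z hz => hPPw (hPQ hz),
          fun m hmM hmPw => hno ⟨m, hmM, hmPw⟩⟩
        intro a b hab hb
        obtain ⟨p, hp, hpn, cc, hcc, h⟩ := (hmemPw b).1 hb
        exact (hmemPw a).2 ⟨p, hp, hpn, cc, hcc, hab.trans h⟩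
      have hle : Pw ≤ P := hPmax.2 hPw𝒮 hPPw
      exact hwP (hle hwPw)
  -- primality on nonnegative elements
  have hposprime : ∀ x y : E, 0 ≤ x → 0 ≤ y → x ⊓ y ∈ P → x ∈ P ∨ y ∈ P := by
    intro x y hx hy hxy
    by_contra hcon
    push_neg at hcon
    obtain ⟨hxP, hyP⟩ := hcon
    obtain ⟨m1, hm1M, p1, hp1, hp1n, c1, hc1, h1⟩ := hext x hx hxP
    obtain ⟨m2, hm2M, p2, hp2, hp2n, c2, hc2, h2⟩ := hext y hy hyP
    set c : ℝ := max c1 c2 with hcdef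
    have hcn : (0:ℝ) ≤ c := le_trans hc1 (le_max_left _ _)
    have e1 : m1 ≤ (p1 + p2) + c • x :=
      h1.trans (add_le_add (le_add_of_nonneg_right hp2n)
        (vl_smul_mono_scalar (le_max_left _ _) hx))
    have e2 : m2 ≤ (p1 + p2) + c • y :=
      h2.trans (add_le_add (le_add_of_nonneg_left hp1n)
        (vl_smul_mono_scalar (le_max_right _ _) hy))
    have key : m1 ⊓ m2 ≤ (p1 + p2) + c • (x ⊓ y) := by
      calc m1 ⊓ m2 ≤ ((p1 + p2) + c • x) ⊓ ((p1 + p2) + c • y) := inf_le_inf e1 e2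
        _ = (p1 + p2) + (c • x ⊓ c • y) := (add_inf _ _ _).symm
        _ = (p1 + p2) + c • (x ⊓ y) := by rw [vl_smul_inf hcn]
    have hwP : (p1 + p2) + c • (x ⊓ y) ∈ P :=
      P.add_mem (P.add_mem hp1 hp2) (P.smul_mem _ hxy)
    have hmmn : 0 ≤ m1 ⊓ m2 := le_inf hm1M.2.1 hm2M.2.1
    have hmmP : m1 ⊓ m2 ∈ P := by
      refine hPid _ _ ?_ hwP
      rw [abs_of_nonneg hmmn]
      exact key.trans (le_abs_self _)
    have hmmM : m1 ⊓ m2 ∈ M :=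
      ⟨hFinf _ _ hm1M.1 hm2M.1, hmmn,
        fun h => (hQprime m1 hm1M.1 m2 hm2M.1 h).elim hm1M.2.2 hm2M.2.2⟩
    exact hPM _ hmmM hmmP
  have hposLE : ∀ a : E, a⁺ ≤ |a| := fun a => by
    rw [← posPart_add_negPart a]; exact le_add_of_nonneg_right (negPart_nonneg a)
  have hnegLE : ∀ a : E, a⁻ ≤ |a| := fun a => by
    rw [← posPart_add_negPart a]; exact le_add_of_nonneg_left (posPart_nonneg a)
  have hprime : ∀ x y : E, x ⊓ y ∈ P → x ∈ P ∨ y ∈ P := by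
    intro x y hxy
    have hxneg : x⁻ ∈ P := by
      refine hPid _ _ ?_ hxy
      rw [abs_of_nonneg (negPart_nonneg x)]
      exact (negPart_anti (inf_le_left : x ⊓ y ≤ x)).trans (hnegLE _)
    have hyneg : y⁻ ∈ P := by
      refine hPid _ _ ?_ hxy
      rw [abs_of_nonneg (negPart_nonneg y)]
      exact (negPart_anti (inf_le_right : x ⊓ y ≤ y)).trans (hnegLE _)
    have hinfpos : x⁺ ⊓ y⁺ ∈ P := by
      refine hPid _ _ ?_ hxy
      rw [abs_of_nonneg (le_inf (posPart_nonneg x) (posPart_nonneg y))]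
      have hd : (0 ⊔ x) ⊓ (0 ⊔ y) ≤ 0 ⊔ (x ⊓ y) :=
        (AddCommGroup.toDistribLattice E).le_sup_inf 0 x y
      calc x⁺ ⊓ y⁺ = (0 ⊔ x) ⊓ (0 ⊔ y) := by
            rw [posPart_def, posPart_def, sup_comm x 0, sup_comm y 0]
        _ ≤ 0 ⊔ (x ⊓ y) := hd
        _ = (x ⊓ y)⁺ := by rw [posPart_def, sup_comm]
        _ ≤ |x ⊓ y| := hposLE _
    rcases hposprime _ _ (posPart_nonneg x) (posPart_nonneg y) hinfpos with h | h
    · left; rw [← posPart_sub_negPart x]; exact P.sub_mem h hxneg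
    · right; rw [← posPart_sub_negPart y]; exact P.sub_mem h hyneg
  have hPF : ∀ x ∈ P, x ∈ F → x ∈ Q := by
    intro f hfP hfF
    by_contra hfQ
    exact hPM |f| ⟨hFabs f hfF, abs_nonneg f, fun h => hfQ (hQofabs f hfF h)⟩ (hPabs f hfP)
  exact ⟨P, ⟨hPid, hPne, hprime⟩, hPP0, hPQ, hPF⟩

theorem statement13 (E : Type*) [Lattice E] [AddCommGroup E] [Module ℝ E]
    [CovariantClass E E (· + ·) (· ≤ ·)] [PosSMulMono ℝ E]
    (F : Submodule ℝ E) (hsub : ∀ x y : E, x ∈ F → y ∈ F → x ⊔ y ∈ F)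
    (hE : PrimeNoetherian E) :
    PrimeNoetherianOn (F : Set E) := by
  intro Q hQ hQmono
  classical
  set C : ℕ → Submodule ℝ E → Prop := fun n P =>
    IsPrimeIdeal P ∧ Q n ≤ P ∧ ∀ x ∈ P, x ∈ F → x ∈ Q n with hCdef
  have hQF : ∀ n, ((Q n : Set E)) ⊆ (F : Set E) := fun n => ((hQ n).1).1
  have step : ∀ (n : ℕ) (P0 : Submodule ℝ E), IsIdeal P0 → (∀ x ∈ P0, x ∈ F → x ∈ Q n) →
      ∃ P, C n P ∧ P0 ≤ P := by
    intro n P0 h1 h2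
    obtain ⟨P, hP, h3, h4, h5⟩ := vl_exists_prime_ext F hsub (Q n) (hQ n) P0 h1 h2
    exact ⟨P, ⟨hP, h4, h5⟩, h3⟩
  have habs0 : ∀ x : E, |x| ≤ 0 → x = 0 := by
    intro x hx
    have h1 : x ≤ 0 := (le_abs_self x).trans hx
    have h2 : -x ≤ 0 := (neg_le_abs x).trans hx
    exact le_antisymm h1 (by simpa using h2)
  have hbot : IsIdeal (⊥ : Submodule ℝ E) := by
    intro x y hxy hy
    rw [Submodule.mem_bot] at hy ⊢
    subst hy
    simp only [abs_zero] at hxy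
    exact habs0 x hxy
  have hbotF : ∀ x ∈ (⊥ : Submodule ℝ E), x ∈ F → x ∈ Q 0 := by
    intro x hx _
    rw [Submodule.mem_bot] at hx
    subst hx
    exact (Q 0).zero_mem
  let f : (n : ℕ) → {P : Submodule ℝ E // C n P} :=
    Nat.rec
      ⟨(step 0 ⊥ hbot hbotF).choose, (step 0 ⊥ hbot hbotF).choose_spec.1⟩
      (fun n prev =>
        ⟨(step (n + 1) prev.1 prev.2.1.1
            (fun x hx hxF => hQmono (Nat.le_succ n) (prev.2.2.2 x hx hxF))).choose,
         (step (n + 1) prev.1 prev.2.1.1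
            (fun x hx hxF => hQmono (Nat.le_succ n) (prev.2.2.2 x hx hxF))).choose_spec.1⟩)
  have hstepmono : ∀ n : ℕ, (f n).1 ≤ (f (n + 1)).1 := fun n =>
    (step (n + 1) (f n).1 (f n).2.1.1
      (fun x hx hxF => hQmono (Nat.le_succ n) ((f n).2.2.2 x hx hxF))).choose_spec.2
  have hmono : Monotone fun n => (f n).1 := monotone_nat_of_le_succ hstepmono
  obtain ⟨N, hN⟩ := hE (fun n => (f n).1) (fun n => (f n).2.1) hmono
  refine ⟨N, fun n hn => ?_⟩
  ext x
  constructor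
  · intro hx
    have hxP : x ∈ (f n).1 := (f n).2.2.1 hx
    have hxP' : x ∈ (f N).1 := by
      have := hN n hn
      rw [← this]
      exact hxP
    exact (f N).2.2.2 x hxP' (hQF n hx)
  · intro hx
    have hxP : x ∈ (f N).1 := (f N).2.2.1 hx
    have hxP' : x ∈ (f n).1 := by
      have := hN n hn
      rw [this]
      exact hxP
    exact (f n).2.2.2 x hxP' (hQF N hx)
end

section
/- Let B be a projection band in a vector lattice E, that is, an ideal B such that every x ∈ E can be written as x = b + c with b ∈ B and c ∈ B^d. Then E is prime Noetherian if and only if both B and B^d, regarded as vector lattices with the induced order, are prime Noetherian. -/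
section Aux
variable {E : Type*} [Lattice E] [AddCommGroup E] [Module ℝ E]
    [CovariantClass E E (· + ·) (· ≤ ·)] [PosSMulMono ℝ E]


variable {E : Type*} [Lattice E] [AddCommGroup E] [Module ℝ E]
    [CovariantClass E E (· + ·) (· ≤ ·)] [PosSMulMono ℝ E]

theorem pn_abs_eq_zero {a : E} (h : |a| ≤ 0) : a = 0 :=
  le_antisymm ((le_abs_self a).trans h) (by simpa using (neg_le_abs a).trans h)

/-- Riesz: for nonneg u v w, u ⊓ (v + w) ≤ u ⊓ v + u ⊓ w. -/
theorem pn_inf_add_le {u v w : E} (hu : 0 ≤ u) (hv : 0 ≤ v) (hw : 0 ≤ w) :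
    u ⊓ (v + w) ≤ u ⊓ v + u ⊓ w := by
  set t := u ⊓ (v + w) with ht
  have key : t - u ⊓ v ≤ u ⊓ w := by
    have : t - u ⊓ v = (t - u) ⊔ (t - v) := by
      rw [sub_eq_add_neg, neg_inf, add_sup, ← sub_eq_add_neg, ← sub_eq_add_neg]
    rw [this]
    apply sup_le
    · exact le_trans (sub_nonpos.2 inf_le_left) (le_inf hu hw)
    · exact le_inf (le_trans (sub_le_self t hv) inf_le_left)
        (sub_le_iff_le_add'.2 inf_le_right)
  exact (sub_le_iff_le_add.1 key).trans_eq (add_comm _ _)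

theorem pn_inf_nsmul {u w : E} (hu : 0 ≤ u) (hw : 0 ≤ w) (h : u ⊓ w = 0) (n : ℕ) :
    (n • u) ⊓ w = 0 := by
  induction n with
  | zero => rw [zero_smul]; exact inf_eq_left.2 hw
  | succ n ih =>
      have h1 : ((n+1) • u) ⊓ w ≤ w ⊓ (n • u) + w ⊓ u := by
        have := pn_inf_add_le hw (nsmul_nonneg hu n) hu
        rw [succ_nsmul, inf_comm]
        exact this
      rw [inf_comm] at ih
      rw [inf_comm u w] at h
      rw [ih, h, add_zero] at h1
      exact le_antisymm h1 (le_inf (nsmul_nonneg hu (n+1)) hw)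

theorem pn_inf_smul {u w : E} (hu : 0 ≤ u) (hw : 0 ≤ w) (h : u ⊓ w = 0)
    {a : ℝ} (ha : 0 ≤ a) : (a • u) ⊓ w = 0 := by
  obtain ⟨n, hn⟩ := exists_nat_ge a
  have h1 : a • u ≤ n • u := by
    rw [← Nat.cast_smul_eq_nsmul ℝ n u, ← sub_nonneg, ← sub_smul]
    exact smul_nonneg (by linarith) hu
  have h2 : (a • u) ⊓ w ≤ (n • u) ⊓ w := inf_le_inf_right w h1
  rw [pn_inf_nsmul hu hw h n] at h2
  exact le_antisymm h2 (le_inf (smul_nonneg ha hu) hw)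

theorem pn_abs_smul_le (a : ℝ) (x : E) : |a • x| ≤ |a| • |x| := by
  rcases le_total 0 a with ha | ha
  · rw [abs_of_nonneg ha]
    apply sup_le
    · exact smul_le_smul_of_nonneg_left (le_abs_self x) ha
    · rw [← smul_neg]
      exact smul_le_smul_of_nonneg_left (neg_le_abs x) ha
  · rw [abs_of_nonpos ha]
    have : a • x = (-a) • (-x) := by simp
    rw [this]
    apply sup_le
    · exact le_trans (smul_le_smul_of_nonneg_left (neg_le_abs x) (by linarith))
        (le_of_eq rfl)
    · rw [← smul_neg, neg_neg]
      exact smul_le_smul_of_nonneg_left (le_abs_self x) (by linarith)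

/-- disjoint elements: |u + v| = |u| + |v|. -/
theorem pn_abs_add_disjoint {u v : E} (h : |u| ⊓ |v| = 0) : |u + v| = |u| + |v| := by
  have hsup : |u| + |v| = |u| ⊔ |v| := by
    have := inf_add_sup |u| |v|
    rw [h, zero_add] at this
    exact this.symm
  have h1 : |(|u| - |v|)| = |u| ⊔ |v| := by
    rw [← sup_sub_inf_eq_abs_sub |v| |u|, inf_comm |v| |u|, h, sub_zero, sup_comm]
  have h2 : |(|u| - |v|)| ≤ |u + v| := by
    have := abs_abs_sub_abs_le u (-v)
    rwa [abs_neg, sub_neg_eq_add] at this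
  exact le_antisymm (abs_add_le u v) (by rw [hsup, ← h1]; exact h2)

theorem pn_disj_le {u v : E} (h : |u| ⊓ |v| = 0) (huv : u ≤ v) : u ≤ 0 := by
  have h1 : u ⊔ 0 ≤ v ⊔ 0 := sup_le_sup_right huv 0
  have h2 : v ⊔ 0 ≤ |v| := sup_le (le_abs_self v) (abs_nonneg v)
  have h3 : u ⊔ 0 ≤ |u| := sup_le (le_abs_self u) (abs_nonneg u)
  have h4 : u ⊔ 0 ≤ |u| ⊓ |v| := le_inf h3 (h1.trans h2)
  rw [h] at h4
  exact le_trans le_sup_left h4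

theorem pn_abs_inf_le (a b : E) : |a ⊓ b| ≤ |a| + |b| := by
  apply sup_le
  · exact le_trans inf_le_left (le_trans (le_abs_self a)
      (le_add_of_nonneg_right (abs_nonneg b)))
  · rw [neg_inf]
    exact sup_le (le_trans (neg_le_abs a) (le_add_of_nonneg_right (abs_nonneg b)))
      (le_trans (neg_le_abs b) (le_add_of_nonneg_left (abs_nonneg a)))



theorem pn_decomp_le {B D : Submodule ℝ E} (hdisj : ∀ b ∈ B, ∀ d ∈ D, |b| ⊓ |d| = 0)
    {u1 d1 u2 d2 : E} (hu1 : u1 ∈ B) (hd1 : d1 ∈ D) (hu2 : u2 ∈ B) (hd2 : d2 ∈ D)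
    (h : u1 + d1 ≤ u2 + d2) : u1 ≤ u2 ∧ d1 ≤ d2 := by
  have hB' : u1 - u2 ∈ B := Submodule.sub_mem B hu1 hu2
  have hD' : d2 - d1 ∈ D := Submodule.sub_mem D hd2 hd1
  have h1 : u1 - u2 ≤ d2 - d1 := by
    rw [sub_le_sub_iff]
    rwa [add_comm u2 d2] at h
  have h2 : d1 - d2 ≤ u2 - u1 := by
    rw [sub_le_sub_iff]
    rwa [add_comm u1 d1] at h
  constructor
  · exact sub_nonpos.1 (pn_disj_le (hdisj _ hB' _ hD') h1)
  · refine sub_nonpos.1 (pn_disj_le ?_ h2)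
    rw [inf_comm]
    exact hdisj _ (Submodule.sub_mem B hu2 hu1) _ (Submodule.sub_mem D hd1 hd2)

theorem pn_inf_decomp {B D : Submodule ℝ E} (hdisj : ∀ b ∈ B, ∀ d ∈ D, |b| ⊓ |d| = 0)
    (hproj : ∀ x : E, ∃ b ∈ B, ∃ d ∈ D, x = b + d)
    {x y xb xd yb yd : E} (hxb : xb ∈ B) (hxd : xd ∈ D) (hyb : yb ∈ B) (hyd : yd ∈ D)
    (hx : x = xb + xd) (hy : y = yb + yd) :
    x ⊓ y = (xb ⊓ yb) + (xd ⊓ yd) := by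
  obtain ⟨wb, hwb, wd, hwd, hw⟩ := hproj (x ⊓ y)
  have hwx : wb ≤ xb ∧ wd ≤ xd := by
    apply pn_decomp_le hdisj hwb hwd hxb hxd
    rw [← hw, ← hx]; exact inf_le_left
  have hwy : wb ≤ yb ∧ wd ≤ yd := by
    apply pn_decomp_le hdisj hwb hwd hyb hyd
    rw [← hw, ← hy]; exact inf_le_right
  apply le_antisymm
  · rw [hw]; exact add_le_add (le_inf hwx.1 hwy.1) (le_inf hwx.2 hwy.2)
  · exact le_inf (by rw [hx]; exact add_le_add inf_le_left inf_le_left)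
      (by rw [hy]; exact add_le_add inf_le_right inf_le_right)

theorem pn_lift (B D : Submodule ℝ E) (hB : IsIdeal B) (hD : IsIdeal D)
    (hdisj : ∀ b ∈ B, ∀ d ∈ D, |b| ⊓ |d| = 0)
    (hproj : ∀ x : E, ∃ b ∈ B, ∃ d ∈ D, x = b + d)
    (hE : PrimeNoetherian E) : PrimeNoetherianOn (D : Set E) := by
  have hBD0 : ∀ z : E, z ∈ B → z ∈ D → z = 0 := by
    intro z hzB hzD
    have h := hdisj z hzB z hzD
    rw [inf_idem] at h
    exact pn_abs_eq_zero h.le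
  intro Q hQ hQmono
  set P : ℕ → Submodule ℝ E := fun n => B ⊔ Q n with hPdef
  have hQD : ∀ n, (Q n : Set E) ⊆ D := fun n => (hQ n).1.1
  have hPprime : ∀ n, IsPrimeIdeal (P n) := by
    intro n
    refine ⟨?_, ?_, ?_⟩
    · -- solid
      intro x y hxy hy
      obtain ⟨b, hb, q, hq, hbq⟩ := Submodule.mem_sup.1 hy
      obtain ⟨xb, hxb, xd, hxd, hx⟩ := hproj x
      have hqD : q ∈ D := hQD n hq
      have h1 : |y| = |b| + |q| := by
        rw [← hbq]; exact pn_abs_add_disjoint (hdisj b hb q hqD)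
      have h2 : |x| = |xb| + |xd| := by
        rw [hx]; exact pn_abs_add_disjoint (hdisj xb hxb xd hxd)
      have h3 : |xd| ≤ |b| + |q| := by
        refine le_trans (le_add_of_nonneg_left (abs_nonneg xb)) ?_
        rw [← h2, ← h1]; exact hxy
      have h4 : |xd| ≤ |q| := by
        have h5 : |xd| ⊓ (|b| + |q|) = |xd| := inf_eq_left.2 h3
        have h6 : |xd| ⊓ (|b| + |q|) ≤ |xd| ⊓ |b| + |xd| ⊓ |q| :=
          pn_inf_add_le (abs_nonneg xd) (abs_nonneg b) (abs_nonneg q)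
        have h7 : |xd| ⊓ |b| = 0 := by rw [inf_comm]; exact hdisj b hb xd hxd
        rw [h5, h7, zero_add] at h6
        exact h6.trans inf_le_right
      have hxdQ : xd ∈ Q n := (hQ n).1.2 xd q hxd h4 hq
      exact Submodule.mem_sup.2 ⟨xb, hxb, xd, hxdQ, hx.symm⟩
    · -- proper
      have hd : ∃ d, d ∈ D ∧ d ∉ Q n := by
        by_contra hcon
        push_neg at hcon
        exact (hQ n).2.1 (Set.Subset.antisymm (hQD n) fun d hd => hcon d hd)
      obtain ⟨d, hdD, hdQ⟩ := hd
      intro htop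
      have hdP : d ∈ P n := by rw [htop]; trivial
      obtain ⟨b, hb, q, hq, hbq⟩ := Submodule.mem_sup.1 hdP
      have hb0 : b = 0 := by
        refine hBD0 b hb ?_
        have : b = d - q := by rw [← hbq]; abel
        rw [this]
        exact Submodule.sub_mem D hdD (hQD n hq)
      rw [hb0, zero_add] at hbq
      exact hdQ (hbq ▸ hq)
    · -- prime
      intro x y hxy
      obtain ⟨xb, hxb, xd, hxd, hx⟩ := hproj x
      obtain ⟨yb, hyb, yd, hyd, hy⟩ := hproj y
      have hinf : x ⊓ y = (xb ⊓ yb) + (xd ⊓ yd) :=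
        pn_inf_decomp hdisj hproj hxb hxd hyb hyd hx hy
      have hxydD : xd ⊓ yd ∈ D := by
        refine hD (xd ⊓ yd) (|xd| + |yd|) ?_ ?_
        · rw [abs_of_nonneg (add_nonneg (abs_nonneg xd) (abs_nonneg yd))]
          exact pn_abs_inf_le xd yd
        · exact Submodule.add_mem D (hD |xd| xd (by rw [abs_abs]) hxd)
            (hD |yd| yd (by rw [abs_abs]) hyd)
      obtain ⟨b', hb', q', hq', hbq'⟩ := Submodule.mem_sup.1 hxy
      have hxybB : xb ⊓ yb ∈ B := by
        refine hB (xb ⊓ yb) (|xb| + |yb|) ?_ ?_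
        · rw [abs_of_nonneg (add_nonneg (abs_nonneg xb) (abs_nonneg yb))]
          exact pn_abs_inf_le xb yb
        · exact Submodule.add_mem B (hB |xb| xb (by rw [abs_abs]) hxb)
            (hB |yb| yb (by rw [abs_abs]) hyb)
      have h8 : b' + q' = xb ⊓ yb + xd ⊓ yd := by rw [hbq', hinf]
      have h9 : xd ⊓ yd - q' = b' - xb ⊓ yb := by
        rw [sub_eq_sub_iff_add_eq_add, h8]
        abel
      have hz : xd ⊓ yd - q' = 0 := by
        refine hBD0 _ ?_ (Submodule.sub_mem D hxydD (hQD n hq'))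
        rw [h9]
        exact Submodule.sub_mem B hb' hxybB
      have hQmem : xd ⊓ yd ∈ Q n := by
        rw [sub_eq_zero] at hz
        exact hz ▸ hq'
      rcases (hQ n).2.2 xd hxd yd hyd hQmem with h | h
      · exact Or.inl (Submodule.mem_sup.2 ⟨xb, hxb, xd, h, hx.symm⟩)
      · exact Or.inr (Submodule.mem_sup.2 ⟨yb, hyb, yd, h, hy.symm⟩)
  have hPmono : Monotone P := fun a b hab => sup_le_sup_left (hQmono hab) B
  obtain ⟨N, hN⟩ := hE P hPprime hPmono
  refine ⟨N, fun n hn => ?_⟩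
  apply le_antisymm _ (hQmono hn)
  intro q hq
  have hqP : q ∈ P N := by rw [← hN n hn]; exact Submodule.mem_sup_right hq
  obtain ⟨b, hb, q'', hq'', hbq⟩ := Submodule.mem_sup.1 hqP
  have hb0 : b = 0 := by
    refine hBD0 b hb ?_
    have : b = q - q'' := by rw [← hbq]; abel
    rw [this]
    exact Submodule.sub_mem D (hQD n hq) (hQD N hq'')
  rw [hb0, zero_add] at hbq
  exact hbq ▸ hq''

theorem pn_descend (B D : Submodule ℝ E)
    (hproj : ∀ x : E, ∃ b ∈ B, ∃ d ∈ D, x = b + d)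
    (hDN : PrimeNoetherianOn (D : Set E))
    (P : ℕ → Submodule ℝ E) (hP : ∀ n, IsPrimeIdeal (P n)) (hmono : Monotone P)
    (hBP : ∀ b ∈ B, b ∈ P 0) : ∃ N, ∀ n, N ≤ n → P n = P N := by
  set Q : ℕ → Submodule ℝ E := fun n => P n ⊓ D with hQdef
  have memQ : ∀ n (x : E), x ∈ Q n ↔ x ∈ P n ∧ x ∈ D := fun n x => Submodule.mem_inf
  have hQprime : ∀ n, IsPrimeIdealOn (D : Set E) (Q n) := by
    intro n
    refine ⟨⟨fun x hx => ((memQ n x).1 hx).2, fun x y hxS hxy hy => ?_⟩, ?_, ?_⟩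
    · exact (memQ n x).2 ⟨(hP n).1 x y hxy ((memQ n y).1 hy).1, hxS⟩
    · intro hcon
      apply (hP n).2.1
      rw [Submodule.eq_top_iff']
      intro x
      obtain ⟨b, hb, d, hd, hx⟩ := hproj x
      have hdQ : d ∈ Q n := by
        show d ∈ (Q n : Set E)
        rw [hcon]; exact hd
      rw [hx]
      exact Submodule.add_mem _ (hmono (Nat.zero_le n) (hBP b hb)) ((memQ n d).1 hdQ).1
    · intro x hxD y hyD hxy
      rcases (hP n).2.2 x y ((memQ n _).1 hxy).1 with h | h
      · exact Or.inl ((memQ n x).2 ⟨h, hxD⟩)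
      · exact Or.inr ((memQ n y).2 ⟨h, hyD⟩)
  have hQmono : Monotone Q := fun a b hab => inf_le_inf_right D (hmono hab)
  obtain ⟨N, hN⟩ := hDN Q hQprime hQmono
  refine ⟨N, fun n hn => ?_⟩
  apply le_antisymm _ (hmono hn)
  intro x hx
  obtain ⟨b, hb, d, hd, hxbd⟩ := hproj x
  have hdP : d ∈ P n := by
    have h := Submodule.sub_mem (P n) hx (hmono (Nat.zero_le n) (hBP b hb))
    rwa [hxbd, add_sub_cancel_left] at h
  have hdQ : d ∈ Q N := by
    rw [← hN n hn]
    exact (memQ n d).2 ⟨hdP, hd⟩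
  rw [hxbd]
  exact Submodule.add_mem _ (hmono (Nat.zero_le N) (hBP b hb)) ((memQ N d).1 hdQ).1

end Aux

/-- The disjoint complement of `B` as a submodule. -/
def pnDComp {E : Type*} [Lattice E] [AddCommGroup E] [Module ℝ E]
    [CovariantClass E E (· + ·) (· ≤ ·)] [PosSMulMono ℝ E]
    (B : Submodule ℝ E) : Submodule ℝ E where
  carrier := {z : E | ∀ s ∈ B, |z| ⊓ |s| = 0}
  zero_mem' := by
    intro s _
    rw [abs_zero]
    exact inf_eq_left.2 (abs_nonneg s)
  add_mem' := by
    intro a b ha hb s hs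
    have h1 : |a + b| ⊓ |s| ≤ (|a| + |b|) ⊓ |s| := inf_le_inf_right _ (abs_add_le a b)
    have h2 : |s| ⊓ (|a| + |b|) ≤ |s| ⊓ |a| + |s| ⊓ |b| :=
      pn_inf_add_le (abs_nonneg s) (abs_nonneg a) (abs_nonneg b)
    rw [inf_comm |s| |a|, inf_comm |s| |b|, ha s hs, hb s hs, add_zero] at h2
    rw [inf_comm (|a| + |b|) |s|] at h1
    exact le_antisymm (h1.trans h2) (le_inf (abs_nonneg _) (abs_nonneg _))
  smul_mem' := by
    intro c x hx s hs
    have h1 : |c • x| ⊓ |s| ≤ (|c| • |x|) ⊓ |s| := inf_le_inf_right _ (pn_abs_smul_le c x)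
    have h2 : (|c| • |x|) ⊓ |s| = 0 :=
      pn_inf_smul (abs_nonneg x) (abs_nonneg s) (hx s hs) (abs_nonneg c)
    exact le_antisymm (h1.trans_eq h2) (le_inf (abs_nonneg _) (abs_nonneg _))

theorem statement14 (E : Type*) [Lattice E] [AddCommGroup E] [Module ℝ E]
    [CovariantClass E E (· + ·) (· ≤ ·)] [PosSMulMono ℝ E]
    (B : Submodule ℝ E) (hB : IsIdeal B)
    (hproj : ∀ x : E, ∃ b ∈ B, ∃ c ∈ {z : E | ∀ s ∈ B, |z| ⊓ |s| = 0}, x = b + c) :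
    PrimeNoetherian E ↔
      (PrimeNoetherianOn (B : Set E) ∧
        PrimeNoetherianOn {z : E | ∀ s ∈ B, |z| ⊓ |s| = 0}) := by
  set D : Submodule ℝ E := pnDComp B with hDdef
  have hDmem : ∀ z : E, z ∈ D ↔ ∀ s ∈ B, |z| ⊓ |s| = 0 := fun z => Iff.rfl
  have hDid : IsIdeal D := by
    intro x y hxy hy s hs
    exact le_antisymm ((inf_le_inf_right _ hxy).trans_eq ((hDmem y).1 hy s hs))
      (le_inf (abs_nonneg _) (abs_nonneg _))
  have hdisj : ∀ b ∈ B, ∀ d ∈ D, |b| ⊓ |d| = 0 := fun b hb d hd => by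
    rw [inf_comm]; exact (hDmem d).1 hd b hb
  have hdisj' : ∀ d ∈ D, ∀ b ∈ B, |d| ⊓ |b| = 0 := fun d hd b hb => (hDmem d).1 hd b hb
  have hproj' : ∀ x : E, ∃ b ∈ B, ∃ d ∈ D, x = b + d := hproj
  have hprojswap : ∀ x : E, ∃ d ∈ D, ∃ b ∈ B, x = d + b := by
    intro x
    obtain ⟨b, hb, d, hd, h⟩ := hproj' x
    exact ⟨d, hd, b, hb, by rw [h, add_comm]⟩
  have hDset : PrimeNoetherianOn (D : Set E) ↔
      PrimeNoetherianOn {z : E | ∀ s ∈ B, |z| ⊓ |s| = 0} := Iff.rfl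
  constructor
  · intro hE
    exact ⟨pn_lift D B hDid hB hdisj' hprojswap hE,
      hDset.1 (pn_lift B D hB hDid hdisj hproj' hE)⟩
  · rintro ⟨hNB, hND⟩ P hP hmono
    by_cases hcase : ∀ b ∈ B, b ∈ P 0
    · exact pn_descend B D hproj' (hDset.2 hND) P hP hmono hcase
    · push_neg at hcase
      obtain ⟨b, hb, hbP⟩ := hcase
      have hDP : ∀ d ∈ D, d ∈ P 0 := by
        intro d hd
        have h0 : |b| ⊓ |d| ∈ P 0 := by rw [hdisj b hb d hd]; exact zero_mem _
        rcases (hP 0).2.2 |b| |d| h0 with h | h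
        · exact absurd ((hP 0).1 b |b| (by rw [abs_abs]) h) hbP
        · exact (hP 0).1 d |d| (by rw [abs_abs]) h
      exact pn_descend D B hprojswap hNB P hP hmono hDP
end

section
/- In a prime Noetherian vector lattice E, every prime ideal P is contained in a prime ideal Q such that the quotient vector space E/Q is finite-dimensional. -/
section AuxVL

variable {E : Type*} [Lattice E] [AddCommGroup E] [Module ℝ E]
  [CovariantClass E E (· + ·) (· ≤ ·)] [PosSMulMono ℝ E]

lemma aux_smul_mono_scalar {e : E} (he : 0 ≤ e) {s t : ℝ} (hst : s ≤ t) : s • e ≤ t • e := by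
  have h : 0 ≤ (t - s) • e := smul_nonneg (by linarith) he
  calc s • e ≤ s • e + (t - s) • e := le_add_of_nonneg_right h
    _ = t • e := by rw [← add_smul]; ring_nf

lemma aux_smul_sup {c : ℝ} (hc : 0 < c) (a b : E) : c • (a ⊔ b) = c • a ⊔ c • b := by
  apply le_antisymm
  · have h : a ⊔ b ≤ c⁻¹ • (c • a ⊔ c • b) := by
      apply sup_le
      · have := smul_le_smul_of_nonneg_left (le_sup_left : c • a ≤ c • a ⊔ c • b)
          (inv_nonneg.mpr hc.le)
        rwa [smul_smul, inv_mul_cancel₀ hc.ne', one_smul] at this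
      · have := smul_le_smul_of_nonneg_left (le_sup_right : c • b ≤ c • a ⊔ c • b)
          (inv_nonneg.mpr hc.le)
        rwa [smul_smul, inv_mul_cancel₀ hc.ne', one_smul] at this
    have := smul_le_smul_of_nonneg_left h hc.le
    rwa [smul_smul, mul_inv_cancel₀ hc.ne', one_smul] at this
  · exact sup_le (smul_le_smul_of_nonneg_left le_sup_left hc.le)
      (smul_le_smul_of_nonneg_left le_sup_right hc.le)

lemma aux_abs_smul (c : ℝ) (x : E) : |c • x| = |c| • |x| := by
  have habs : ∀ z : E, |z| = z ⊔ -z := fun z => rfl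
  rcases lt_trichotomy c 0 with hc | hc | hc
  · have h1 : c • x = -((-c) • x) := by rw [neg_smul, neg_neg]
    rw [h1, abs_neg, abs_of_neg hc, habs, habs, aux_smul_sup (by linarith : (0:ℝ) < -c),
      ← smul_neg]
  · simp [hc]
  · rw [abs_of_pos hc, habs, habs, aux_smul_sup hc, ← smul_neg]

lemma aux_abs_sup_le (a b : E) : |a ⊔ b| ≤ |a| + |b| := by
  rw [abs_le']
  constructor
  · exact sup_le ((le_abs_self a).trans (le_add_of_nonneg_right (abs_nonneg b)))
      ((le_abs_self b).trans (le_add_of_nonneg_left (abs_nonneg a)))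
  · rw [neg_sup]
    exact inf_le_left.trans ((neg_le_abs a).trans
      (le_add_of_nonneg_right (abs_nonneg b)))

lemma aux_abs_mem {Q : Submodule ℝ E} (hQ : IsIdeal Q) {q : E} (hq : q ∈ Q) : |q| ∈ Q :=
  hQ |q| q (by rw [abs_abs]) hq

lemma aux_mem_of_abs_mem {Q : Submodule ℝ E} (hQ : IsIdeal Q) {q : E} (hq : |q| ∈ Q) : q ∈ Q :=
  hQ q |q| (by rw [abs_abs]) hq

lemma aux_sup_mem {Q : Submodule ℝ E} (hQ : IsIdeal Q) {a b : E} (ha : a ∈ Q) (hb : b ∈ Q) :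
    a ⊔ b ∈ Q := by
  have h : |a| + |b| ∈ Q := Q.add_mem (aux_abs_mem hQ ha) (aux_abs_mem hQ hb)
  refine hQ (a ⊔ b) (|a| + |b|) ?_ h
  rw [abs_of_nonneg (add_nonneg (abs_nonneg a) (abs_nonneg b))]
  exact aux_abs_sup_le a b

/-- The ideal generated by `Q` and `w`. -/
def genIdeal (Q : Submodule ℝ E) (w : E) : Submodule ℝ E where
  carrier := {z | ∃ q ∈ Q, 0 ≤ q ∧ ∃ c : ℝ, 0 ≤ c ∧ |z| ≤ q + c • w}
  zero_mem' := ⟨0, Q.zero_mem, le_rfl, 0, le_rfl, by simp⟩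
  add_mem' := by
    rintro a b ⟨q1, hq1, hq1n, c1, hc1, h1⟩ ⟨q2, hq2, hq2n, c2, hc2, h2⟩
    refine ⟨q1 + q2, Q.add_mem hq1 hq2, add_nonneg hq1n hq2n, c1 + c2, by positivity, ?_⟩
    calc |a + b| ≤ |a| + |b| := abs_add_le a b
      _ ≤ (q1 + c1 • w) + (q2 + c2 • w) := add_le_add h1 h2
      _ = (q1 + q2) + (c1 + c2) • w := by module
  smul_mem' := by
    rintro t a ⟨q, hq, hqn, c, hc, h⟩
    refine ⟨|t| • q, Q.smul_mem _ hq, smul_nonneg (abs_nonneg t) hqn, |t| * c,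
      by positivity, ?_⟩
    rw [aux_abs_smul, ← smul_smul, ← smul_add]
    exact smul_le_smul_of_nonneg_left h (abs_nonneg t)

lemma genIdeal_isIdeal (Q : Submodule ℝ E) (w : E) : IsIdeal (genIdeal Q w) := by
  rintro x y hxy ⟨q, hq, hqn, c, hc, h⟩
  exact ⟨q, hq, hqn, c, hc, hxy.trans h⟩

lemma le_genIdeal {Q : Submodule ℝ E} (hQ : IsIdeal Q) (w : E) : Q ≤ genIdeal Q w := by
  intro q hq
  exact ⟨|q|, aux_abs_mem hQ hq, abs_nonneg q, 0, le_rfl, by simp⟩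

lemma mem_genIdeal_self (Q : Submodule ℝ E) {w : E} (hw : 0 ≤ w) : w ∈ genIdeal Q w :=
  ⟨0, Q.zero_mem, le_rfl, 1, zero_le_one, by simp [abs_of_nonneg hw]⟩

/-- Any proper ideal containing a prime ideal is prime. -/
lemma aux_prime_of_ge {Q J : Submodule ℝ E} (hQ : IsPrimeIdeal Q) (hJ : IsIdeal J)
    (hQJ : Q ≤ J) (hJtop : J ≠ ⊤) : IsPrimeIdeal J := by
  refine ⟨hJ, hJtop, fun x y hxy => ?_⟩
  have key : (x - x ⊓ y) ⊓ (y - x ⊓ y) = 0 := by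
    have h : (x + -(x ⊓ y)) ⊓ (y + -(x ⊓ y)) = (x ⊓ y) + -(x ⊓ y) := (inf_add _ _ _).symm
    simpa [sub_eq_add_neg] using h
  rcases hQ.2.2 _ _ (key ▸ Q.zero_mem) with h | h
  · left
    have := J.add_mem (hQJ h) hxy
    simpa using this
  · right
    have := J.add_mem (hQJ h) hxy
    simpa using this

end AuxVL

theorem statement15 (E : Type*) [Lattice E] [AddCommGroup E] [Module ℝ E]
    [CovariantClass E E (· + ·) (· ≤ ·)] [PosSMulMono ℝ E]
    (hE : PrimeNoetherian E) (P : Submodule ℝ E) (hP : IsPrimeIdeal P) :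
    ∃ Q : Submodule ℝ E, IsPrimeIdeal Q ∧ P ≤ Q ∧ FiniteDimensional ℝ (E ⧸ Q) := by
  -- Step 1: find a maximal prime ideal `Q` above `P`.
  obtain ⟨Q, hQ, hPQ, hQmax⟩ :
      ∃ Q : Submodule ℝ E, IsPrimeIdeal Q ∧ P ≤ Q ∧
        ∀ Q', IsPrimeIdeal Q' → Q ≤ Q' → Q' = Q := by
    by_contra hcon
    push_neg at hcon
    have step : ∀ t : {Q : Submodule ℝ E // IsPrimeIdeal Q ∧ P ≤ Q},
        ∃ t' : {Q : Submodule ℝ E // IsPrimeIdeal Q ∧ P ≤ Q}, t.1 < t'.1 := by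
      rintro ⟨Q, hQ, hPQ⟩
      obtain ⟨Q', hQ', hQQ', hne⟩ := hcon Q hQ hPQ
      exact ⟨⟨Q', hQ', hPQ.trans hQQ'⟩, lt_of_le_of_ne hQQ' (Ne.symm hne)⟩
    choose f hf using step
    set seq : ℕ → {Q : Submodule ℝ E // IsPrimeIdeal Q ∧ P ≤ Q} :=
      fun n => f^[n] ⟨P, hP, le_rfl⟩ with hseq
    have hsucc : ∀ n, seq (n + 1) = f (seq n) := by
      intro n; simp [hseq, Function.iterate_succ_apply']
    have hmono : Monotone (fun n => (seq n).1) := by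
      apply monotone_nat_of_le_succ
      intro n
      rw [hsucc n]
      exact (hf (seq n)).le
    obtain ⟨N, hN⟩ := hE (fun n => (seq n).1) (fun n => (seq n).2.1) hmono
    have h1 := hN (N + 1) (by omega)
    have h2 := hf (seq N)
    rw [← hsucc N] at h2
    exact absurd h1 (ne_of_gt h2)
  -- The element `e` outside `Q`.
  obtain ⟨x₀, hx₀⟩ : ∃ x₀ : E, x₀ ∉ Q := by
    by_contra hcon
    push_neg at hcon
    exact hQ.2.1 (Submodule.eq_top_iff'.mpr hcon)
  set e : E := |x₀| with he_def
  have he0 : (0:E) ≤ e := abs_nonneg x₀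
  have heQ : e ∉ Q := fun h => hx₀ (aux_mem_of_abs_mem hQ.1 h)
  -- Maximality as an ideal.
  have hmaxJ : ∀ J : Submodule ℝ E, IsIdeal J → Q ≤ J → J = Q ∨ J = ⊤ := by
    intro J hJideal hQJ
    by_cases hJtop : J = ⊤
    · exact Or.inr hJtop
    · exact Or.inl (hQmax J (aux_prime_of_ge hQ hJideal hQJ hJtop) hQJ)
  -- `e` is a strong unit modulo `Q`.
  have hgen : ∀ w : E, 0 ≤ w → w ∉ Q → genIdeal Q w = ⊤ := by
    intro w hw0 hw
    rcases hmaxJ (genIdeal Q w) (genIdeal_isIdeal Q w) (le_genIdeal hQ.1 w) with h | h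
    · exfalso
      have : w ∈ genIdeal Q w := mem_genIdeal_self Q hw0
      rw [h] at this
      exact hw this
    · exact h
  have hsu : ∀ x : E, ∃ q ∈ Q, 0 ≤ q ∧ ∃ c : ℝ, 0 ≤ c ∧ |x| ≤ q + c • e := by
    intro x
    have : x ∈ genIdeal Q e := by rw [hgen e he0 heQ]; trivial
    exact this
  -- Key step: every `x` is a scalar multiple of `e` modulo `Q`.
  have key : ∀ x : E, ∃ t : ℝ, x - t • e ∈ Q := by
    intro x
    obtain ⟨q₀, hq₀, hq₀n, c₀, hc₀, hxc₀⟩ := hsu x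
    set S : Set ℝ := {t : ℝ | ∃ q ∈ Q, x ≤ t • e + q} with hS_def
    have hSne : S.Nonempty := by
      refine ⟨c₀, q₀, hq₀, ?_⟩
      calc x ≤ |x| := le_abs_self x
        _ ≤ q₀ + c₀ • e := hxc₀
        _ = c₀ • e + q₀ := by abel
    have hSbdd : BddBelow S := by
      refine ⟨-c₀, fun t ht => ?_⟩
      by_contra hlt
      push_neg at hlt
      obtain ⟨q, hq, hxt⟩ := ht
      have hneg : -x ≤ q₀ + c₀ • e := (neg_le_abs x).trans hxc₀
      -- 0 ≤ (t + c₀) • e + (q + q₀)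
      have h0 : (0:E) ≤ (t + c₀) • e + (q + q₀) := by
        have h1 : (0:E) = x + -x := by abel
        have h2 : x + -x ≤ (t • e + q) + (q₀ + c₀ • e) := add_le_add hxt hneg
        rw [← h1] at h2
        calc (0:E) ≤ (t • e + q) + (q₀ + c₀ • e) := h2
          _ = (t + c₀) • e + (q + q₀) := by module
      set s : ℝ := -(t + c₀) with hs_def
      have hs : 0 < s := by simp only [hs_def]; linarith
      have hse : s • e ≤ q + q₀ := by
        have := add_le_add_left h0 (s • e)
        simp only [zero_add] at this
        calc s • e ≤ (t + c₀) • e + (q + q₀) + s • e := this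
          _ = ((t + c₀) + s) • e + (q + q₀) := by simp only [hs_def]; module
          _ = (0:ℝ) • e + (q + q₀) := by rw [show (t + c₀) + s = 0 by rw [hs_def]; ring]
          _ = q + q₀ := by simp
      have hseQ : s • e ∈ Q := by
        refine hQ.1 (s • e) (q + q₀) ?_ (Q.add_mem hq hq₀)
        rw [abs_of_nonneg (smul_nonneg hs.le he0)]
        exact hse.trans (le_abs_self _)
      have : e ∈ Q := by
        have := Q.smul_mem s⁻¹ hseQ
        rwa [smul_smul, inv_mul_cancel₀ hs.ne', one_smul] at this
      exact heQ this
    set t₀ : ℝ := sInf S with ht₀_def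
    refine ⟨t₀, ?_⟩
    set y : E := x - t₀ • e with hy_def
    -- (6a): y ≤ ε • e + q for suitable q ∈ Q
    have h6a : ∀ ε : ℝ, 0 < ε → ∃ q ∈ Q, y ≤ ε • e + q := by
      intro ε hε
      obtain ⟨t, htS, htlt⟩ := Real.lt_sInf_add_pos hSne hε
      obtain ⟨q, hq, hxt⟩ := htS
      refine ⟨q, hq, ?_⟩
      calc y = x - t₀ • e := rfl
        _ ≤ (t • e + q) - t₀ • e := sub_le_sub_right hxt _
        _ = (t - t₀) • e + q := by module
        _ ≤ ε • e + q := add_le_add_left (aux_smul_mono_scalar he0 (by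
            linarith)) q
    -- (6b): -y ≤ ε • e + q for suitable q ∈ Q
    have h6b : ∀ ε : ℝ, 0 < ε → ∃ q ∈ Q, -y ≤ ε • e + q := by
      intro ε hε
      set a : E := y + ε • e with ha_def
      have hinf : (a ⊔ 0) ⊓ (-a ⊔ 0) = 0 := by
        have := posPart_inf_negPart_eq_zero a
        rwa [posPart_def, negPart_def] at this
      rcases hQ.2.2 _ _ (hinf ▸ Q.zero_mem) with h | h
      · exfalso
        -- then t₀ - ε ∈ S, contradicting t₀ = sInf S
        have htS : t₀ - ε ∈ S := by
          refine ⟨a ⊔ 0, h, ?_⟩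
          have ha : a ≤ a ⊔ 0 := le_sup_left
          calc x = a + (t₀ - ε) • e := by
                simp only [ha_def, hy_def]; module
            _ ≤ (a ⊔ 0) + (t₀ - ε) • e := add_le_add_left ha _
            _ = (t₀ - ε) • e + (a ⊔ 0) := by abel
        have := csInf_le hSbdd htS
        rw [← ht₀_def] at this
        linarith
      · refine ⟨-a ⊔ 0, h, ?_⟩
        have ha : -a ≤ -a ⊔ 0 := le_sup_left
        have : -y - ε • e ≤ -a ⊔ 0 := by
          calc -y - ε • e = -a := by simp only [ha_def]; module
            _ ≤ -a ⊔ 0 := ha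
        calc -y = (-y - ε • e) + ε • e := by abel
          _ ≤ (-a ⊔ 0) + ε • e := add_le_add_left this _
          _ = ε • e + (-a ⊔ 0) := by abel
    -- (6c): |y| ≤ ε • e + q
    have h6c : ∀ ε : ℝ, 0 < ε → ∃ q ∈ Q, |y| ≤ ε • e + q := by
      intro ε hε
      obtain ⟨q₁, hq₁, h1⟩ := h6a ε hε
      obtain ⟨q₂, hq₂, h2⟩ := h6b ε hε
      refine ⟨q₁ ⊔ q₂, aux_sup_mem hQ.1 hq₁ hq₂, ?_⟩
      rw [abs_le']
      constructor
      · exact h1.trans (add_le_add_right le_sup_left _)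
      · exact h2.trans (add_le_add_right le_sup_right _)
    -- (6d): y ∈ Q
    by_contra hy
    have hw : |y| ∉ Q := fun h => hy (aux_mem_of_abs_mem hQ.1 h)
    have htop := hgen |y| (abs_nonneg y) hw
    have heJ : e ∈ genIdeal Q |y| := by rw [htop]; trivial
    obtain ⟨q, hq, hqn, c, hc, hec⟩ := heJ
    rw [abs_of_nonneg he0] at hec
    set ε : ℝ := 1 / (2 * (c + 1)) with hε_def
    have hεpos : 0 < ε := by positivity
    obtain ⟨qε, hqε, hyε⟩ := h6c ε hεpos
    have hcy : c • |y| ≤ (c * ε) • e + c • qε := by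
      calc c • |y| ≤ c • (ε • e + qε) := smul_le_smul_of_nonneg_left hyε hc
        _ = (c * ε) • e + c • qε := by rw [smul_add, smul_smul]
    have hcε : c * ε ≤ 1 / 2 := by
      rw [hε_def, mul_one_div,
        div_le_div_iff₀ (by positivity : (0:ℝ) < 2 * (c + 1)) (by norm_num : (0:ℝ) < 2)]
      nlinarith
    have he_half : e ≤ (1/2 : ℝ) • e + (q + c • qε) := by
      calc e ≤ q + c • |y| := hec
        _ ≤ q + ((c * ε) • e + c • qε) := add_le_add_right hcy _
        _ = (c * ε) • e + (q + c • qε) := by abel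
        _ ≤ (1/2 : ℝ) • e + (q + c • qε) :=
            add_le_add_left (aux_smul_mono_scalar he0 hcε) _
    have hhalf : (1/2 : ℝ) • e ≤ q + c • qε := by
      have := sub_le_sub_right he_half ((1/2 : ℝ) • e)
      calc (1/2 : ℝ) • e = e - (1/2 : ℝ) • e := by module
        _ ≤ ((1/2 : ℝ) • e + (q + c • qε)) - (1/2 : ℝ) • e := this
        _ = q + c • qε := by abel
    have hQhalf : (1/2 : ℝ) • e ∈ Q := by
      refine hQ.1 _ (q + c • qε) ?_ (Q.add_mem hq (Q.smul_mem c hqε))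
      rw [abs_of_nonneg (smul_nonneg (by norm_num) he0)]
      exact hhalf.trans (le_abs_self _)
    have : e ∈ Q := by
      have := Q.smul_mem (2 : ℝ) hQhalf
      rwa [smul_smul, show (2:ℝ) * (1/2) = 1 by norm_num, one_smul] at this
    exact heQ this
  -- Conclude: E ⧸ Q is spanned by the image of e.
  refine ⟨Q, hQ, hPQ, ?_⟩
  have hsurj : Function.Surjective
      (LinearMap.toSpanSingleton ℝ (E ⧸ Q) (Submodule.Quotient.mk e)) := by
    intro z
    obtain ⟨x, rfl⟩ := Submodule.Quotient.mk_surjective Q z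
    obtain ⟨t, ht⟩ := key x
    refine ⟨t, ?_⟩
    rw [LinearMap.toSpanSingleton_apply, ← Submodule.Quotient.mk_smul]
    exact ((Submodule.Quotient.eq Q).mpr ht).symm
  exact Module.Finite.of_surjective _ hsurj
end

section
/- An Archimedean vector lattice E is finite-dimensional if and only if E is Noetherian, i.e., every increasing sequence I_1 ⊆ I_2 ⊆ ... of ideals of E is eventually constant. -/
set_option linter.unusedSectionVars false
set_option linter.unusedVariables false

section Aux

variable {E : Type*} [Lattice E] [AddCommGroup E] [Module ℝ E]
    [CovariantClass E E (· + ·) (· ≤ ·)] [PosSMulMono ℝ E]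

lemma VL.smul_le_smul_scalar {c d : ℝ} (h : c ≤ d) {x : E} (hx : 0 ≤ x) :
    c • x ≤ d • x := by
  have h0 : (0:E) ≤ (d - c) • x := smul_nonneg (sub_nonneg.2 h) hx
  rw [sub_smul, sub_nonneg] at h0
  exact h0

lemma VL.abs_smul_le (r : ℝ) (y : E) : |r • y| ≤ |r| • |y| := by
  have h1 : r • y ≤ |r| • |y| := by
    rcases le_total 0 r with hr | hr
    · calc r • y ≤ r • |y| := smul_le_smul_of_nonneg_left (le_abs_self y) hr
        _ ≤ |r| • |y| := VL.smul_le_smul_scalar (le_abs_self r) (abs_nonneg y)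
    · calc r • y = (-r) • (-y) := by rw [neg_smul_neg]
        _ ≤ (-r) • |y| := smul_le_smul_of_nonneg_left (neg_le_abs y) (neg_nonneg.2 hr)
        _ ≤ |r| • |y| := VL.smul_le_smul_scalar (neg_le_abs r) (abs_nonneg y)
  have h2 : -(r • y) ≤ |r| • |y| := by
    rw [← neg_smul]
    rcases le_total 0 r with hr | hr
    · calc (-r) • y = r • (-y) := by rw [neg_smul, smul_neg]
        _ ≤ r • |y| := smul_le_smul_of_nonneg_left (neg_le_abs y) hr
        _ ≤ |r| • |y| := VL.smul_le_smul_scalar (le_abs_self r) (abs_nonneg y)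
    · calc (-r) • y ≤ (-r) • |y| := smul_le_smul_of_nonneg_left (le_abs_self y) (neg_nonneg.2 hr)
        _ ≤ |r| • |y| := VL.smul_le_smul_scalar (neg_le_abs r) (abs_nonneg y)
  exact sup_le h1 h2

lemma VL.list_sum_nonneg : ∀ l : List E, (∀ y ∈ l, 0 ≤ y) → (0:E) ≤ l.sum := by
  intro l
  induction l with
  | nil => simp
  | cons a t ih =>
      intro h
      rw [List.sum_cons]
      exact add_nonneg (h a (by simp)) (ih fun y hy => h y (by simp [hy]))

lemma VL.single_le_list_sum {a : E} : ∀ l : List E, (∀ y ∈ l, 0 ≤ y) → a ∈ l → a ≤ l.sum := by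
  intro l
  induction l with
  | nil => simp
  | cons b t ih =>
      intro h ha
      rw [List.sum_cons]
      rcases List.mem_cons.1 ha with rfl | ha
      · exact le_add_of_nonneg_right (VL.list_sum_nonneg t fun y hy => h y (by simp [hy]))
      · exact (ih (fun y hy => h y (by simp [hy])) ha).trans
          (le_add_of_nonneg_left (h b (by simp)))

/-- disjointness is additive on the right for nonneg elements -/
lemma VL.disj_add {x y z : E} (hx : 0 ≤ x) (hy : 0 ≤ y) (hz : 0 ≤ z)
    (hxy : x ⊓ y = 0) (hxz : x ⊓ z = 0) : x ⊓ (y + z) = 0 := by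
  set w := x ⊓ (y + z) with hw
  have hw0 : 0 ≤ w := le_inf hx (add_nonneg hy hz)
  have h1 : w - y ≤ x ⊓ z := by
    refine le_inf ?_ ?_
    · exact sub_le_iff_le_add.2 (le_trans inf_le_left (le_add_of_nonneg_right hy))
    · exact sub_le_iff_le_add.2 (by rw [add_comm]; exact inf_le_right)
  rw [hxz] at h1
  have h2 : w ≤ y := by
    have := sub_nonpos.1 h1
    exact this
  have h3 : w ≤ x ⊓ y := le_inf inf_le_left h2
  rw [hxy] at h3
  exact le_antisymm h3 hw0

lemma VL.disj_nsmul {x y : E} (hx : 0 ≤ x) (hy : 0 ≤ y) (hxy : x ⊓ y = 0) (n : ℕ) :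
    x ⊓ (n • y) = 0 := by
  induction n with
  | zero => simpa using inf_eq_right.2 hx
  | succ n ih =>
      rw [succ_nsmul]
      exact VL.disj_add hx (nsmul_nonneg hy n) hy ih hxy

lemma VL.disj_list_sum {x : E} (hx : 0 ≤ x) :
    ∀ l : List E, (∀ y ∈ l, 0 ≤ y ∧ x ⊓ y = 0) → x ⊓ l.sum = 0 := by
  intro l
  induction l with
  | nil => intro _; simpa using inf_of_le_left hx
  | cons a t ih =>
      intro h
      rw [List.sum_cons]
      exact VL.disj_add hx (h a (by simp)).1 (List.sum_nonneg fun y hy => (h y (by simp [hy])).1)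
        (h a (by simp)).2 (ih fun y hy => h y (by simp [hy]))

/-- a nonneg element disjoint from `s` and dominated by a multiple of `s` is zero -/
lemma VL.disj_dominated {u s : E} (hu : 0 ≤ u) (hs : 0 ≤ s) (hd : u ⊓ s = 0)
    {c : ℝ} (hc : 0 ≤ c) (hle : u ≤ c • s) : u = 0 := by
  obtain ⟨n, hn⟩ := exists_nat_ge c
  have h1 : u ≤ (n : ℝ) • s := hle.trans (VL.smul_le_smul_scalar hn hs)
  rw [Nat.cast_smul_eq_nsmul] at h1
  have h2 := VL.disj_nsmul hu hs hd n
  have : u ≤ 0 := by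
    rw [← h2]; exact le_inf le_rfl h1
  exact le_antisymm this hu

lemma VL.disj_smul {x y : E} (hx : 0 ≤ x) (hy : 0 ≤ y) (hxy : x ⊓ y = 0)
    {c d : ℝ} (hc : 0 ≤ c) (hd : 0 ≤ d) : (c • x) ⊓ (d • y) = 0 := by
  obtain ⟨n, hn⟩ := exists_nat_ge c
  obtain ⟨m, hm⟩ := exists_nat_ge d
  have h1 : x ⊓ (m • y) = 0 := VL.disj_nsmul hx hy hxy m
  have h2 : (m • y) ⊓ (n • x) = 0 := by
    rw [inf_comm] at h1
    exact VL.disj_nsmul (nsmul_nonneg hy m) hx h1 n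
  have h3 : (c • x) ⊓ (d • y) ≤ (n • x) ⊓ (m • y) := by
    refine inf_le_inf ?_ ?_
    · rw [← Nat.cast_smul_eq_nsmul ℝ]; exact VL.smul_le_smul_scalar hn hx
    · rw [← Nat.cast_smul_eq_nsmul ℝ]; exact VL.smul_le_smul_scalar hm hy
  rw [inf_comm] at h2
  rw [h2] at h3
  exact le_antisymm h3 (le_inf (smul_nonneg hc hx) (smul_nonneg hd hy))

/-- The principal ideal generated by `x`. -/
def VL.pIdeal (x : E) : Submodule ℝ E where
  carrier := {y | ∃ c : ℝ, 0 ≤ c ∧ |y| ≤ c • x}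
  zero_mem' := ⟨0, le_refl 0, by simp⟩
  add_mem' := by
    rintro a b ⟨c, hc, hca⟩ ⟨d, hd, hdb⟩
    exact ⟨c + d, add_nonneg hc hd, (abs_add_le a b).trans (by rw [add_smul]; exact add_le_add hca hdb)⟩
  smul_mem' := by
    rintro r a ⟨c, hc, hca⟩
    refine ⟨|r| * c, mul_nonneg (abs_nonneg r) hc, ?_⟩
    calc |r • a| ≤ |r| • |a| := VL.abs_smul_le r a
      _ ≤ |r| • (c • x) := smul_le_smul_of_nonneg_left hca (abs_nonneg r)
      _ = (|r| * c) • x := (mul_smul _ _ _).symm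

lemma VL.mem_pIdeal {x y : E} : y ∈ VL.pIdeal x ↔ ∃ c : ℝ, 0 ≤ c ∧ |y| ≤ c • x := Iff.rfl

lemma VL.pIdeal_isIdeal (x : E) : IsIdeal (VL.pIdeal x) := by
  rintro a b hab ⟨c, hc, hcb⟩
  exact ⟨c, hc, hab.trans hcb⟩

lemma VL.pIdeal_mono {x y : E} (hx : 0 ≤ x) (h : x ≤ y) : VL.pIdeal x ≤ VL.pIdeal y := by
  rintro a ⟨c, hc, hca⟩
  exact ⟨c, hc, hca.trans (smul_le_smul_of_nonneg_left h hc)⟩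

/-- No infinite pairwise-disjoint sequence of positive elements under the ACC. -/
lemma VL.no_inf_disjoint
    (hacc : ∀ I : ℕ → Submodule ℝ E, (∀ n, IsIdeal (I n)) → Monotone I →
        ∃ N : ℕ, ∀ n : ℕ, N ≤ n → I n = I N)
    (u : ℕ → E) (hpos : ∀ n, 0 < u n) (hdisj : ∀ m n, m ≠ n → u m ⊓ u n = 0) : False := by
  set s : ℕ → E := fun n => ((List.range (n+1)).map u).sum with hs
  have hsnn : ∀ n, 0 ≤ s n := by
    intro n
    exact VL.list_sum_nonneg _ (by rintro y hy; obtain ⟨i, -, rfl⟩ := List.mem_map.1 hy; exact (hpos i).le)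
  have hsm : ∀ n, s n ≤ s (n+1) := by
    intro n
    have : s (n+1) = s n + u (n+1) := by
      simp [hs, List.range_succ]
    rw [this]
    exact le_add_of_nonneg_right (hpos (n+1)).le
  set I : ℕ → Submodule ℝ E := fun n => VL.pIdeal (s n) with hI
  have hImono : Monotone I := by
    refine monotone_nat_of_le_succ fun n => ?_
    exact VL.pIdeal_mono (hsnn n) (hsm n)
  obtain ⟨N, hN⟩ := hacc I (fun n => VL.pIdeal_isIdeal _) hImono
  have hmem : u (N+1) ∈ I (N+1) := by
    refine ⟨1, zero_le_one, ?_⟩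
    rw [abs_of_nonneg (hpos (N+1)).le, one_smul]
    show u (N+1) ≤ ((List.range (N+2)).map u).sum
    exact VL.single_le_list_sum _
      (fun y hy => by obtain ⟨i, -, rfl⟩ := List.mem_map.1 hy; exact (hpos i).le)
      (List.mem_map.2 ⟨N+1, by simp, rfl⟩)
  rw [hN (N+1) (Nat.le_succ N)] at hmem
  obtain ⟨c, hc, hcu⟩ := hmem
  rw [abs_of_nonneg (hpos (N+1)).le] at hcu
  have hd : u (N+1) ⊓ s N = 0 := by
    refine VL.disj_list_sum (hpos (N+1)).le _ ?_
    rintro y hy; obtain ⟨i, hi, rfl⟩ := List.mem_map.1 hy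
    refine ⟨(hpos i).le, hdisj _ _ ?_⟩
    rw [List.mem_range] at hi; omega
  exact (hpos (N+1)).ne' (VL.disj_dominated (hpos (N+1)).le (hsnn N) hd hc hcu)

end Aux

section Atoms

variable {E : Type*} [Lattice E] [AddCommGroup E] [Module ℝ E]
    [CovariantClass E E (· + ·) (· ≤ ·)] [PosSMulMono ℝ E]

/-- The set of admissible coefficients of `a` inside `x`. -/
def VL.S (a x : E) : Set ℝ := {t : ℝ | 0 ≤ t ∧ t • a ≤ x}

lemma VL.coeff_spec (harch : VLArchimedean E) {a x : E} (ha : 0 < a) (hx : 0 ≤ x) :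
    (0:ℝ) ∈ VL.S a x ∧ BddAbove (VL.S a x) ∧ 0 ≤ sSup (VL.S a x) ∧
      sSup (VL.S a x) • a ≤ x := by
  have h0 : (0:ℝ) ∈ VL.S a x := ⟨le_rfl, by rw [zero_smul]; exact hx⟩
  have hbdd : BddAbove (VL.S a x) := by
    by_contra hb
    rw [not_bddAbove_iff] at hb
    have hax : ∀ n : ℕ, n • a ≤ x := by
      intro n
      obtain ⟨t, ht, hnt⟩ := hb (n : ℝ)
      rw [← Nat.cast_smul_eq_nsmul ℝ]
      exact (VL.smul_le_smul_scalar hnt.le ha.le).trans ht.2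
    exact absurd (harch a x hax) fun h => ha.not_ge h
  have hc0 : 0 ≤ sSup (VL.S a x) := le_csSup hbdd h0
  refine ⟨h0, hbdd, hc0, ?_⟩
  set c := sSup (VL.S a x) with hc
  have hkey : ∀ n : ℕ, n • (c • a - x) ≤ a := by
    intro n
    rcases Nat.eq_zero_or_pos n with rfl | hn
    · simpa using ha.le
    · have hnr : (0:ℝ) < (n:ℝ) := Nat.cast_pos.2 hn
      obtain ⟨t, htS, hlt⟩ := exists_lt_of_lt_csSup ⟨0, h0⟩
        (show c - 1/(n:ℝ) < c by linarith [one_div_pos.2 hnr])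
      have h1 : c • a - x ≤ (1/(n:ℝ)) • a := by
        calc c • a - x ≤ c • a - t • a := sub_le_sub_left htS.2 _
          _ = (c - t) • a := by rw [sub_smul]
          _ ≤ (1/(n:ℝ)) • a := VL.smul_le_smul_scalar (by linarith) ha.le
      calc n • (c • a - x) ≤ n • ((1/(n:ℝ)) • a) := nsmul_le_nsmul_right h1 n
        _ = ((n:ℝ) * (1/(n:ℝ))) • a := by rw [← Nat.cast_smul_eq_nsmul ℝ, smul_smul]
        _ = a := by rw [mul_one_div, div_self hnr.ne', one_smul]
  have := harch _ _ hkey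
  rwa [sub_nonpos] at this

lemma VL.atom_dichotomy {a : E} (ha : IsAtomElem a) {x : E} (h0 : 0 ≤ x) (hxa : x ≤ a)
    {t : ℝ} (ht : 0 < t) : x ≤ t • a ∨ t • a ≤ x := by
  set u := (x - t • a)⁺ with hu
  set v := (x - t • a)⁻ with hv
  have hta : 0 ≤ t • a := smul_nonneg ht.le ha.1.le
  have huv : u ⊓ v = 0 := posPart_inf_negPart_eq_zero _
  have hu0 : 0 ≤ u := posPart_nonneg _
  have hv0 : 0 ≤ v := negPart_nonneg _
  have hua : u ≤ a := by
    show (x - t • a) ⊔ 0 ≤ a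
    exact sup_le ((sub_le_self x hta).trans hxa) ha.1.le
  have hva : v ≤ t • a := by
    show (-(x - t • a)) ⊔ 0 ≤ t • a
    rw [neg_sub]
    exact sup_le (sub_le_self _ h0) hta
  have hw0 : 0 ≤ t⁻¹ • v := smul_nonneg (inv_nonneg.2 ht.le) hv0
  have hwa : t⁻¹ • v ≤ a := by
    calc t⁻¹ • v ≤ t⁻¹ • (t • a) := smul_le_smul_of_nonneg_left hva (inv_nonneg.2 ht.le)
      _ = a := by rw [smul_smul, inv_mul_cancel₀ ht.ne', one_smul]
  have huw : u ⊓ (t⁻¹ • v) = 0 := by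
    have := VL.disj_smul hu0 hv0 huv (c := 1) (d := t⁻¹) zero_le_one (inv_nonneg.2 ht.le)
    rwa [one_smul] at this
  rcases ha.2 u (t⁻¹ • v) hu0 hua hw0 hwa huw with h | h
  · left
    have : x - t • a ≤ 0 := posPart_eq_zero.1 h
    exact sub_nonpos.1 this
  · right
    have hv' : v = 0 := by
      have : t • (t⁻¹ • v) = t • (0:E) := congrArg (t • ·) h
      rwa [smul_smul, mul_inv_cancel₀ ht.ne', one_smul, smul_zero] at this
    have : 0 ≤ x - t • a := negPart_eq_zero.1 hv'
    exact sub_nonneg.1 this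

lemma VL.atom_interval (harch : VLArchimedean E) {a x : E} (ha : IsAtomElem a)
    (h0 : 0 ≤ x) (hxa : x ≤ a) : ∃ t : ℝ, 0 ≤ t ∧ x = t • a := by
  obtain ⟨hm0, hbdd, hc0, hcle⟩ := VL.coeff_spec harch ha.1 h0
  set c := sSup (VL.S a x) with hc
  refine ⟨c, hc0, ?_⟩
  have hle2 : x ≤ c • a := by
    have hkey : ∀ n : ℕ, n • (x - c • a) ≤ a := by
      intro n
      rcases Nat.eq_zero_or_pos n with rfl | hn
      · simpa using ha.1.le
      · have hnr : (0:ℝ) < (n:ℝ) := Nat.cast_pos.2 hn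
        have htpos : 0 < c + 1/(n:ℝ) := by linarith [one_div_pos.2 hnr]
        have htnot : c + 1/(n:ℝ) ∉ VL.S a x := by
          intro hmem
          have := le_csSup hbdd hmem
          linarith [one_div_pos.2 hnr]
        have hxle : x ≤ (c + 1/(n:ℝ)) • a := by
          rcases VL.atom_dichotomy ha h0 hxa htpos with h | h
          · exact h
          · exact absurd ⟨htpos.le, h⟩ htnot
        have h1 : x - c • a ≤ (1/(n:ℝ)) • a := by
          have : x - c • a ≤ (c + 1/(n:ℝ)) • a - c • a := sub_le_sub_right hxle _
          rwa [add_smul, add_sub_cancel_left] at this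
        calc n • (x - c • a) ≤ n • ((1/(n:ℝ)) • a) := nsmul_le_nsmul_right h1 n
          _ = ((n:ℝ) * (1/(n:ℝ))) • a := by rw [← Nat.cast_smul_eq_nsmul ℝ, smul_smul]
          _ = a := by rw [mul_one_div, div_self hnr.ne', one_smul]
    have := harch _ _ hkey
    rwa [sub_nonpos] at this
  exact le_antisymm hle2 hcle

end Atoms

section Exist

variable {E : Type*} [Lattice E] [AddCommGroup E] [Module ℝ E]
    [CovariantClass E E (· + ·) (· ≤ ·)] [PosSMulMono ℝ E]

lemma VL.exists_atom_le
    (hacc : ∀ I : ℕ → Submodule ℝ E, (∀ n, IsIdeal (I n)) → Monotone I →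
        ∃ N : ℕ, ∀ n : ℕ, N ≤ n → I n = I N)
    {r : E} (hr : 0 < r) : ∃ a : E, IsAtomElem a ∧ a ≤ r := by
  by_contra hno
  push_neg at hno
  have hsplit : ∀ e : {e : E // 0 < e ∧ e ≤ r},
      ∃ p : E × E, 0 < p.1 ∧ 0 < p.2 ∧ p.1 ≤ e.1 ∧ p.2 ≤ e.1 ∧ p.1 ⊓ p.2 = 0 := by
    rintro ⟨e, he, her⟩
    have hna : ¬ IsAtomElem e := fun hA => (hno e hA her).elim
    rw [IsAtomElem] at hna
    push_neg at hna
    obtain ⟨x, y, hx0, hxe, hy0, hye, hxy, hxne, hyne⟩ := hna he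
    exact ⟨(x, y), hx0.lt_of_ne (Ne.symm hxne), hy0.lt_of_ne (Ne.symm hyne), hxe, hye, hxy⟩
  obtain ⟨f, hf⟩ : ∃ f : {e : E // 0 < e ∧ e ≤ r} → E × E, ∀ e,
      0 < (f e).1 ∧ 0 < (f e).2 ∧ (f e).1 ≤ e.1 ∧ (f e).2 ≤ e.1 ∧ (f e).1 ⊓ (f e).2 = 0 :=
    ⟨fun e => Classical.choose (hsplit e), fun e => Classical.choose_spec (hsplit e)⟩
  let F : ℕ → {e : E // 0 < e ∧ e ≤ r} := fun n =>
    Nat.rec ⟨r, hr, le_rfl⟩ (fun _ p => ⟨(f p).2, (hf p).2.1, ((hf p).2.2.2.1).trans p.2.2⟩) n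
  have hFsucc : ∀ n : ℕ, (F (n+1)).1 = (f (F n)).2 := fun n => rfl
  have hFdec : ∀ m n : ℕ, m ≤ n → (F n).1 ≤ (F m).1 := by
    intro m n hmn
    induction n, hmn using Nat.le_induction with
    | base => exact le_rfl
    | succ n hmn ih => exact ((hFsucc n) ▸ (hf (F n)).2.2.2.1).trans ih
  set u : ℕ → E := fun n => (f (F n)).1 with hu
  have hupos : ∀ n, 0 < u n := fun n => (hf (F n)).1
  have hdisj : ∀ m n : ℕ, m < n → u m ⊓ u n = 0 := by
    intro m n hmn
    have h1 : u n ≤ (F (m+1)).1 := ((hf (F n)).2.2.1).trans (hFdec (m+1) n hmn)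
    rw [hFsucc m] at h1
    have h2 : u m ⊓ u n ≤ (f (F m)).1 ⊓ (f (F m)).2 := inf_le_inf le_rfl h1
    rw [(hf (F m)).2.2.2.2] at h2
    exact le_antisymm h2 (le_inf (hupos m).le (hupos n).le)
  refine VL.no_inf_disjoint hacc u hupos fun m n hmn => ?_
  rcases lt_or_gt_of_ne hmn with h | h
  · exact hdisj m n h
  · rw [inf_comm]; exact hdisj n m h

lemma VL.exists_maximal_atom_list
    (hacc : ∀ I : ℕ → Submodule ℝ E, (∀ n, IsIdeal (I n)) → Monotone I →
        ∃ N : ℕ, ∀ n : ℕ, N ≤ n → I n = I N) :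
    ∃ l : List E, (∀ x ∈ l, IsAtomElem x) ∧ List.Pairwise (fun x y => x ⊓ y = 0) l ∧
      ∀ b : E, IsAtomElem b → (∀ x ∈ l, b ⊓ x = 0) → False := by
  by_contra hno
  push_neg at hno
  have H : ∀ l : {l : List E // (∀ x ∈ l, IsAtomElem x) ∧ List.Pairwise (fun x y => x ⊓ y = 0) l},
      ∃ b : E, IsAtomElem b ∧ ∀ x ∈ l.1, b ⊓ x = 0 := by
    rintro ⟨l, hl1, hl2⟩
    obtain ⟨b, hb1, hb2⟩ := hno l hl1 hl2
    exact ⟨b, hb1, hb2.1⟩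
  obtain ⟨f, hf⟩ : ∃ f : {l : List E // (∀ x ∈ l, IsAtomElem x) ∧
        List.Pairwise (fun x y => x ⊓ y = 0) l} → E,
      ∀ l, IsAtomElem (f l) ∧ ∀ x ∈ l.1, (f l) ⊓ x = 0 :=
    ⟨fun l => Classical.choose (H l), fun l => Classical.choose_spec (H l)⟩
  let W : ℕ → {l : List E // (∀ x ∈ l, IsAtomElem x) ∧
      List.Pairwise (fun x y => x ⊓ y = 0) l} := fun n =>
    Nat.rec ⟨[], by simp, List.Pairwise.nil⟩
      (fun _ p => ⟨f p :: p.1,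
        fun x hx => by
          rcases List.mem_cons.1 hx with rfl | hx
          · exact (hf p).1
          · exact p.2.1 x hx,
        List.pairwise_cons.2 ⟨(hf p).2, p.2.2⟩⟩) n
  have hWsucc : ∀ n : ℕ, (W (n+1)).1 = f (W n) :: (W n).1 := fun n => rfl
  set u : ℕ → E := fun n => f (W n) with hu
  have humem : ∀ m n : ℕ, m < n → u m ∈ (W n).1 := by
    intro m n hmn
    induction n, hmn using Nat.le_induction with
    | base => rw [hWsucc m]; exact List.mem_cons_self
    | succ n hmn ih => rw [hWsucc n]; exact List.mem_cons_of_mem _ ih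
  have hupos : ∀ n, 0 < u n := fun n => ((hf (W n)).1).1
  have hdisj : ∀ m n : ℕ, m < n → u m ⊓ u n = 0 := by
    intro m n hmn
    rw [inf_comm]
    exact (hf (W n)).2 (u m) (humem m n hmn)
  refine VL.no_inf_disjoint hacc u hupos fun m n hmn => ?_
  rcases lt_or_gt_of_ne hmn with h | h
  · exact hdisj m n h
  · rw [inf_comm]; exact hdisj n m h

lemma VL.sum_le_of_disjoint {x : E} (hx : 0 ≤ x) :
    ∀ l : List E, (∀ y ∈ l, 0 ≤ y ∧ y ≤ x) → List.Pairwise (fun y z => y ⊓ z = 0) l →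
      l.sum ≤ x := by
  intro l
  induction l with
  | nil => intro _ _; simpa using hx
  | cons a t ih =>
      intro h hpw
      obtain ⟨hd, hpwt⟩ := List.pairwise_cons.1 hpw
      have hts : t.sum ≤ x := ih (fun y hy => h y (by simp [hy])) hpwt
      have hda : a ⊓ t.sum = 0 :=
        VL.disj_list_sum (h a (by simp)).1 t fun y hy => ⟨(h y (by simp [hy])).1, hd y hy⟩
      have hsum : a + t.sum = a ⊔ t.sum := by
        have := inf_add_sup a t.sum
        rw [hda, zero_add] at this
        exact this.symm
      rw [List.sum_cons, hsum]
      exact sup_le (h a (by simp)).2 hts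

end Exist

theorem statement16 (E : Type*) [Lattice E] [AddCommGroup E] [Module ℝ E]
    [CovariantClass E E (· + ·) (· ≤ ·)] [PosSMulMono ℝ E]
    (harch : VLArchimedean E) :
    FiniteDimensional ℝ E ↔
      (∀ I : ℕ → Submodule ℝ E, (∀ n, IsIdeal (I n)) → Monotone I →
        ∃ N : ℕ, ∀ n : ℕ, N ≤ n → I n = I N) := by
  constructor
  · intro fd I hIdeal hmono
    have hn : IsNoetherian ℝ E := inferInstance
    obtain ⟨N, hN⟩ := monotone_stabilizes_iff_noetherian.2 hn ⟨I, hmono⟩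
    exact ⟨N, fun n hn' => (hN n hn').symm⟩
  · intro hacc
    obtain ⟨l, hatoms, hpw, hmax⟩ := VL.exists_maximal_atom_list hacc
    have key : ∀ x : E, 0 ≤ x → x ∈ Submodule.span ℝ {y : E | y ∈ l} := by
      intro x hx
      set c : E → ℝ := fun a => sSup (VL.S a x) with hcdef
      have hspec : ∀ a ∈ l, (0:ℝ) ∈ VL.S a x ∧ BddAbove (VL.S a x) ∧ 0 ≤ c a ∧ c a • a ≤ x :=
        fun a ha => VL.coeff_spec harch (hatoms a ha).1 hx
      set v : E := (l.map (fun a => c a • a)).sum with hvdef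
      have hv_le : v ≤ x := by
        refine VL.sum_le_of_disjoint hx _ ?_ ?_
        · rintro y hy
          obtain ⟨a, ha, rfl⟩ := List.mem_map.1 hy
          exact ⟨smul_nonneg (hspec a ha).2.2.1 (hatoms a ha).1.le, (hspec a ha).2.2.2⟩
        · rw [List.pairwise_map]
          refine hpw.imp_of_mem ?_
          intro a b ha hb hab
          exact VL.disj_smul (hatoms a ha).1.le (hatoms b hb).1.le hab
            (hspec a ha).2.2.1 (hspec b hb).2.2.1
      set r : E := x - v with hrdef
      have hr0 : 0 ≤ r := sub_nonneg.2 hv_le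
      have hra : ∀ a ∈ l, r ⊓ a = 0 := by
        intro a ha
        have hz0 : 0 ≤ r ⊓ a := le_inf hr0 (hatoms a ha).1.le
        obtain ⟨t, ht0, htz⟩ :=
          VL.atom_interval harch (hatoms a ha) hz0 inf_le_right
        rcases eq_or_lt_of_le ht0 with rfl | htpos
        · rw [htz, zero_smul]
        · exfalso
          have hta_le_r : t • a ≤ r := htz ▸ inf_le_left
          have hca_le_v : c a • a ≤ v :=
            VL.single_le_list_sum _
              (fun y hy => by
                obtain ⟨b, hb, rfl⟩ := List.mem_map.1 hy
                exact smul_nonneg (hspec b hb).2.2.1 (hatoms b hb).1.le)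
              (List.mem_map.2 ⟨a, ha, rfl⟩)
          have hmem : c a + t ∈ VL.S a x := by
            refine ⟨add_nonneg (hspec a ha).2.2.1 htpos.le, ?_⟩
            rw [add_smul]
            calc c a • a + t • a ≤ v + r := add_le_add hca_le_v hta_le_r
              _ = x := by rw [hrdef, add_sub_cancel]
          have := le_csSup (hspec a ha).2.1 hmem
          have : c a + t ≤ c a := this
          linarith
      have hrz : r = 0 := by
        by_contra hne
        have hrpos : 0 < r := hr0.lt_of_ne (Ne.symm hne)
        obtain ⟨b, hb, hble⟩ := VL.exists_atom_le hacc hrpos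
        refine hmax b hb fun a ha => ?_
        have h1 : b ⊓ a ≤ r ⊓ a := inf_le_inf hble le_rfl
        rw [hra a ha] at h1
        exact le_antisymm h1 (le_inf hb.1.le (hatoms a ha).1.le)
      have hxv : x = v := by
        have : x - v = 0 := hrz
        exact sub_eq_zero.1 this
      rw [hxv, hvdef]
      refine list_sum_mem ?_
      intro y hy
      obtain ⟨a, ha, rfl⟩ := List.mem_map.1 hy
      exact Submodule.smul_mem _ _ (Submodule.subset_span ha)
    have htop : Submodule.span ℝ {y : E | y ∈ l} = ⊤ := by
      rw [eq_top_iff]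
      intro x _
      have hx : x = x⁺ - x⁻ := (posPart_sub_negPart x).symm
      rw [hx]
      exact sub_mem (key _ (posPart_nonneg x)) (key _ (negPart_nonneg x))
    classical
    have htop' : Submodule.span ℝ (↑l.toFinset : Set E) = ⊤ := by
      rw [List.coe_toFinset]
      exact htop
    exact Module.finite_def.2 ⟨l.toFinset, htop'⟩
end

section
/- Let Ω be a nonempty set and let c00(Ω) be the vector lattice of finitely supported real-valued functions on Ω with pointwise order. Then an ideal I of c00(Ω) is maximal if and only if I = M_w := {x ∈ c00(Ω) : x(w) = 0} for some w ∈ Ω. Moreover, for a proper ideal I of c00(Ω) the following are equivalent: (i) I is a minimal prime ideal; (ii) I is a prime ideal; (iii) I is a maximal ideal. -/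
/-- A minimal prime ideal: a prime ideal not strictly containing another prime ideal. -/
def IsMinimalPrimeIdeal {E : Type*} [Lattice E] [AddCommGroup E] [Module ℝ E]
    (P : Submodule ℝ E) : Prop :=
  IsPrimeIdeal P ∧ ∀ Q : Submodule ℝ E, IsPrimeIdeal Q → Q ≤ P → Q = P


section Aux
variable {Ω : Type*}

lemma fs_abs_apply (x : Ω →₀ ℝ) (w : Ω) : |x| w = |x w| := by
  rw [abs, abs]; simp [Finsupp.sup_apply]

lemma fs_le_def {x y : Ω →₀ ℝ} : x ≤ y ↔ ∀ w, x w ≤ y w := Finsupp.le_def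

/-- `M_w` as a submodule. -/
noncomputable def Mw (w : Ω) : Submodule ℝ (Ω →₀ ℝ) := LinearMap.ker (Finsupp.lapply w)

lemma mem_Mw {w : Ω} {x : Ω →₀ ℝ} : x ∈ Mw w ↔ x w = 0 := Iff.rfl

lemma Mw_isIdeal (w : Ω) : IsIdeal (Mw w) := by
  intro x y hxy hy
  have := fs_le_def.1 hxy w
  rw [fs_abs_apply, fs_abs_apply] at this
  rw [mem_Mw] at hy ⊢
  rw [hy] at this
  simpa using abs_nonpos_iff.1 (by simpa using this)

lemma single_ne_Mw (w : Ω) : Finsupp.single w 1 ∉ Mw w := by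
  simp [mem_Mw]

lemma Mw_ne_top (w : Ω) : Mw w ≠ ⊤ := fun h => single_ne_Mw w (h ▸ Submodule.mem_top)

/-- solidity gives: x ∈ I implies single w (x w) ∈ I. -/
lemma single_mem_of_mem {I : Submodule ℝ (Ω →₀ ℝ)} (hI : IsIdeal I)
    {x : Ω →₀ ℝ} (hx : x ∈ I) (w : Ω) : Finsupp.single w (x w) ∈ I := by
  refine hI _ x ?_ hx
  rw [fs_le_def]
  intro u
  rw [fs_abs_apply, fs_abs_apply]
  rcases eq_or_ne u w with rfl | h
  · simp
  · simp [Finsupp.single_apply_ne_zero, Finsupp.single_eq_of_ne' (Ne.symm h), abs_nonneg]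

lemma single_one_mem_of_mem {I : Submodule ℝ (Ω →₀ ℝ)} (hI : IsIdeal I)
    {x : Ω →₀ ℝ} (hx : x ∈ I) {w : Ω} (hw : x w ≠ 0) : Finsupp.single w 1 ∈ I := by
  have h1 : Finsupp.single w (x w) ∈ I := single_mem_of_mem hI hx w
  have := I.smul_mem (x w)⁻¹ h1
  rwa [Finsupp.smul_single, smul_eq_mul, inv_mul_cancel₀ hw] at this

/-- If an ideal contains single w 1 for every w in the support of x, then x ∈ I. -/
lemma mem_of_singles {I : Submodule ℝ (Ω →₀ ℝ)} (x : Ω →₀ ℝ)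
    (h : ∀ w ∈ x.support, Finsupp.single w (1:ℝ) ∈ I) : x ∈ I := by
  have hx : x = ∑ w ∈ x.support, Finsupp.single w (x w) := by
    rw [← Finsupp.sum]; exact (Finsupp.sum_single x).symm
  rw [hx]
  refine Submodule.sum_mem I fun w hw => ?_
  have := I.smul_mem (x w) (h w hw)
  rwa [Finsupp.smul_single, smul_eq_mul, mul_one] at this

/-- Mw is maximal. -/
lemma Mw_isMaximal (w : Ω) : IsMaximalIdeal (Mw w) := by
  refine ⟨Mw_isIdeal w, Mw_ne_top w, fun J hJ hle => ?_⟩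
  by_cases h : J ≤ Mw w
  · left; exact le_antisymm h hle
  · right
    rw [Submodule.eq_top_iff']
    obtain ⟨x, hxJ, hxw⟩ := SetLike.not_le_iff_exists.1 h
    rw [mem_Mw] at hxw
    have h1 : Finsupp.single w 1 ∈ J := single_one_mem_of_mem hJ hxJ hxw
    intro y
    have hd : y - Finsupp.single w (y w) ∈ Mw w := by
      rw [mem_Mw]; simp
    have : y - Finsupp.single w (y w) + Finsupp.single w (y w) ∈ J := by
      refine J.add_mem (hle hd) ?_
      have := J.smul_mem (y w) h1
      rwa [Finsupp.smul_single, smul_eq_mul, mul_one] at this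
    simpa using this

/-- Any proper ideal is below some Mw. -/
lemma le_Mw_of_proper {I : Submodule ℝ (Ω →₀ ℝ)} (hI : IsIdeal I) (hne : I ≠ ⊤) :
    ∃ w : Ω, I ≤ Mw w := by
  by_contra h
  push_neg at h
  apply hne
  rw [Submodule.eq_top_iff']
  intro x
  refine mem_of_singles x fun w _ => ?_
  obtain ⟨z, hzI, hzw⟩ := SetLike.not_le_iff_exists.1 (h w)
  rw [mem_Mw] at hzw
  exact single_one_mem_of_mem hI hzI hzw

lemma Mw_isPrime (w : Ω) : IsPrimeIdeal (Mw w) := by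
  refine ⟨Mw_isIdeal w, Mw_ne_top w, fun x y hxy => ?_⟩
  rw [mem_Mw, Finsupp.inf_apply] at hxy
  rw [mem_Mw, mem_Mw]
  rcases le_total (x w) (y w) with h | h
  · left; rw [inf_eq_left.2 h] at hxy; exact hxy
  · right; rw [inf_eq_right.2 h] at hxy; exact hxy

/-- A prime ideal equals some Mw. -/
lemma prime_eq_Mw {I : Submodule ℝ (Ω →₀ ℝ)} (hP : IsPrimeIdeal I) :
    ∃ w : Ω, I = Mw w := by
  obtain ⟨hid, hne, hpr⟩ := hP
  obtain ⟨w, hle⟩ := le_Mw_of_proper hid hne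
  refine ⟨w, le_antisymm hle fun x hx => ?_⟩
  rw [mem_Mw] at hx
  have hs : Finsupp.single w 1 ∉ I := fun h => (single_ne_Mw w) (hle h)
  have key : ∀ y : Ω →₀ ℝ, y w = 0 → y ⊔ 0 ∈ I := by
    intro y hy
    have hmeet : (y ⊔ 0) ⊓ Finsupp.single w 1 = 0 := by
      ext u
      rw [Finsupp.inf_apply, Finsupp.sup_apply]
      rcases eq_or_ne u w with rfl | h
      · simp [Finsupp.single_eq_same, hy]
      · simp only [Finsupp.single_eq_of_ne' (Ne.symm h), Finsupp.coe_zero, Pi.zero_apply]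
        rw [inf_eq_right]
        exact le_sup_right
    rcases hpr _ _ (hmeet ▸ I.zero_mem) with h | h
    · exact h
    · exact absurd h hs
  have hpos : x ⊔ 0 ∈ I := key x hx
  have hneg : (-x) ⊔ 0 ∈ I := key (-x) (by simp [hx])
  have hsub := I.sub_mem hpos hneg
  have hxeq : (x ⊔ 0) - ((-x) ⊔ 0) = x := by
    ext u
    simp only [Finsupp.coe_sub, Pi.sub_apply, Finsupp.sup_apply, Finsupp.coe_neg,
      Pi.neg_apply, Finsupp.coe_zero, Pi.zero_apply]
    rcases le_total (x u) 0 with h | h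
    · rw [sup_eq_right.2 h, sup_eq_left.2 (by linarith)]; ring
    · rw [sup_eq_left.2 h, sup_eq_right.2 (by linarith)]; ring
  rwa [hxeq] at hsub

lemma Mw_le_Mw {w w' : Ω} (h : Mw w' ≤ Mw w) : w' = w := by
  by_contra hne
  have : Finsupp.single w (1:ℝ) ∈ Mw w' := by
    rw [mem_Mw, Finsupp.single_eq_of_ne' (fun h => hne h.symm)]
  exact single_ne_Mw w (h this)

end Aux

theorem statement18 (Ω : Type*) [Nonempty Ω]
    (I : Submodule ℝ (Ω →₀ ℝ)) (hI : IsIdeal I) :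
    (IsMaximalIdeal I ↔ ∃ w : Ω, ∀ x : Ω →₀ ℝ, x ∈ I ↔ x w = 0) ∧
    (I ≠ ⊤ →
      ((IsMinimalPrimeIdeal I ↔ IsPrimeIdeal I) ∧
        (IsPrimeIdeal I ↔ IsMaximalIdeal I))) := by
  have hMwC : ∀ w : Ω, (∀ x : Ω →₀ ℝ, x ∈ I ↔ x w = 0) → I = Mw w := by
    intro w h
    ext x
    rw [mem_Mw]; exact h x
  have part1 : IsMaximalIdeal I ↔ ∃ w : Ω, ∀ x : Ω →₀ ℝ, x ∈ I ↔ x w = 0 := by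
    constructor
    · rintro ⟨hid, hne, hmax⟩
      obtain ⟨w, hle⟩ := le_Mw_of_proper hid hne
      rcases hmax (Mw w) (Mw_isIdeal w) hle with h | h
      · exact ⟨w, fun x => by rw [← h, mem_Mw]⟩
      · exact absurd h (Mw_ne_top w)
    · rintro ⟨w, h⟩
      rw [hMwC w h]
      exact Mw_isMaximal w
  refine ⟨part1, fun hne => ?_⟩
  have h23 : IsPrimeIdeal I ↔ IsMaximalIdeal I := by
    constructor
    · intro hp
      obtain ⟨w, rfl⟩ := prime_eq_Mw hp
      exact Mw_isMaximal w
    · intro hm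
      obtain ⟨w, h⟩ := part1.1 hm
      rw [hMwC w h]
      exact Mw_isPrime w
  refine ⟨?_, h23⟩
  constructor
  · exact fun h => h.1
  · intro hp
    refine ⟨hp, fun Q hQ hle => ?_⟩
    obtain ⟨w, rfl⟩ := prime_eq_Mw hp
    obtain ⟨w', rfl⟩ := prime_eq_Mw hQ
    rw [Mw_le_Mw hle]
end

section
/- Let K be a compact Hausdorff space. If there exists a norm dense vector sublattice E of C(K) that contains only finitely many minimal prime ideals, then K is finite and E = C(K). -/
section Aux

variable {K : Type*} [TopologicalSpace K] [CompactSpace K] [T2Space K]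
variable {E : Submodule ℝ C(K, ℝ)}

set_option linter.unusedSectionVars false

/-- The ideal of functions in `E` vanishing at `x`. -/
def vanishIdeal (E : Submodule ℝ C(K, ℝ)) (x : K) : Submodule ℝ C(K, ℝ) where
  carrier := {f | f ∈ E ∧ f x = 0}
  add_mem' := by
    rintro f g ⟨hf, hf0⟩ ⟨hg, hg0⟩
    exact ⟨E.add_mem hf hg, by simp [hf0, hg0]⟩
  zero_mem' := ⟨E.zero_mem, rfl⟩
  smul_mem' := by
    rintro c f ⟨hf, hf0⟩
    exact ⟨E.smul_mem c hf, by simp [hf0]⟩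

lemma mem_vanishIdeal {x : K} {f : C(K, ℝ)} :
    f ∈ vanishIdeal E x ↔ f ∈ E ∧ f x = 0 := Iff.rfl

lemma abs_mem' (hsub : ∀ f g : C(K, ℝ), f ∈ E → g ∈ E → f ⊔ g ∈ E)
    {f : C(K, ℝ)} (hf : f ∈ E) : |f| ∈ E := by
  have : |f| = f ⊔ (-f) := rfl
  rw [this]
  exact hsub _ _ hf (E.neg_mem hf)

/-- dense approximation -/
lemma exists_approx (hdense : Dense (E : Set C(K, ℝ))) (g : C(K, ℝ)) {ε : ℝ} (hε : 0 < ε) :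
    ∃ f ∈ E, ∀ z : K, |f z - g z| < ε := by
  obtain ⟨f, hfE, hf⟩ := hdense.exists_dist_lt g hε
  rw [dist_comm] at hf
  refine ⟨f, hfE, fun z => ?_⟩
  have := ContinuousMap.dist_apply_le_dist (f := f) (g := g) z
  rw [Real.dist_eq] at this
  exact lt_of_le_of_lt this hf

/-- there is an element of `E` close to the constant 1 -/
lemma exists_near_one (hdense : Dense (E : Set C(K, ℝ))) :
    ∃ u ∈ E, ∀ z : K, 3/4 < u z ∧ u z < 5/4 := by
  obtain ⟨u, huE, hu⟩ := exists_approx hdense 1 (by norm_num : (0:ℝ) < 1/4)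
  refine ⟨u, huE, fun z => ?_⟩
  have := hu z
  simp only [ContinuousMap.one_apply] at this
  constructor <;> [nlinarith [abs_lt.mp this]; nlinarith [abs_lt.mp this]]

lemma vanishIdeal_prime (hdense : Dense (E : Set C(K, ℝ))) (x : K) :
    IsPrimeIdealOn (E : Set C(K, ℝ)) (vanishIdeal E x) := by
  refine ⟨⟨fun f hf => hf.1, fun f g hfE hle hg => ⟨hfE, ?_⟩⟩, ?_, ?_⟩
  · have h1 : |f| x ≤ |g| x := hle x
    have h2 : |f x| ≤ |g x| := h1
    rw [hg.2] at h2
    have h3 : |f x| ≤ 0 := by simpa using h2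
    exact abs_eq_zero.mp (le_antisymm h3 (abs_nonneg _))
  · intro h
    obtain ⟨u, huE, hu⟩ := exists_near_one hdense
    have hu2 : u ∈ vanishIdeal E x := by rw [SetLike.mem_coe.symm, h]; exact huE
    have := hu2.2
    linarith [(hu x).1]
  · rintro f hf g hg ⟨hfgE, hfg0⟩
    have h : f x ⊓ g x = 0 := hfg0
    rcases le_total (f x) (g x) with hle | hle
    · left; exact ⟨hf, by rwa [inf_eq_left.mpr hle] at h⟩
    · right; exact ⟨hg, by rwa [inf_eq_right.mpr hle] at h⟩

/-- separation: for `x ≠ y` there is `h ∈ E` with `h x = 0 < h y`. -/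
lemma exists_sep (hsub : ∀ f g : C(K, ℝ), f ∈ E → g ∈ E → f ⊔ g ∈ E)
    (hdense : Dense (E : Set C(K, ℝ))) {x y : K} (hxy : x ≠ y) :
    ∃ h : C(K, ℝ), h ∈ vanishIdeal E x ∧ h ∉ vanishIdeal E y := by
  obtain ⟨g0, hg0x, hg0y, hg0range⟩ := exists_continuous_zero_one_of_isClosed
    (isClosed_singleton (x := x)) (isClosed_singleton (x := y))
    (Set.disjoint_singleton.mpr hxy)
  set g : C(K, ℝ) := (2 : ℝ) • g0 with hg
  have hgx : g x = 0 := by simp [hg, hg0x (Set.mem_singleton x)]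
  have hgy : g y = 2 := by
    have := hg0y (Set.mem_singleton y)
    simp [hg, this]
  obtain ⟨f, hfE, hf⟩ := exists_approx hdense g (by norm_num : (0:ℝ) < 1/2)
  obtain ⟨u, huE, hu⟩ := exists_near_one hdense
  refine ⟨(f - u) ⊔ 0, ⟨hsub _ _ (E.sub_mem hfE huE) E.zero_mem, ?_⟩, ?_⟩
  · have hfx := hf x
    rw [hgx] at hfx
    have hle : f x - u x ≤ 0 := by nlinarith [abs_lt.mp hfx, (hu x).1]
    show (f x - u x) ⊔ (0:ℝ) = 0
    simpa using hle
  · intro hmem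
    have h0 : (f y - u y) ⊔ (0:ℝ) = 0 := hmem.2
    have hfy := hf y
    rw [hgy] at hfy
    have hpos : 0 < f y - u y := by nlinarith [abs_lt.mp hfy, (hu y).2]
    have := sup_eq_right.mp h0
    linarith

/-- Two ideals containing a common prime ideal are comparable. -/
lemma ideals_comparable (hsub : ∀ f g : C(K, ℝ), f ∈ E → g ∈ E → f ⊔ g ∈ E)
    {P Q₁ Q₂ : Submodule ℝ C(K, ℝ)}
    (hP : IsPrimeIdealOn (E : Set C(K, ℝ)) P)
    (h1 : IsIdealOn (E : Set C(K, ℝ)) Q₁) (h2 : IsIdealOn (E : Set C(K, ℝ)) Q₂)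
    (hPQ1 : P ≤ Q₁) (hPQ2 : P ≤ Q₂) : Q₁ ≤ Q₂ ∨ Q₂ ≤ Q₁ := by
  by_contra hcon
  push_neg at hcon
  obtain ⟨hn1, hn2⟩ := hcon
  obtain ⟨f, hfQ1, hfQ2⟩ := SetLike.not_le_iff_exists.mp hn1
  obtain ⟨g, hgQ2, hgQ1⟩ := SetLike.not_le_iff_exists.mp hn2
  have hfE : f ∈ E := h1.1 hfQ1
  have hgE : g ∈ E := h2.1 hgQ2
  have habsf : |f| ∈ E := abs_mem' hsub hfE
  have habsg : |g| ∈ E := abs_mem' hsub hgE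
  set a : C(K, ℝ) := (|f| - |g|) ⊔ 0 with ha
  set b : C(K, ℝ) := (-(|f| - |g|)) ⊔ 0 with hb
  have haE : a ∈ E := hsub _ _ (E.sub_mem habsf habsg) E.zero_mem
  have hbE : b ∈ E := hsub _ _ (E.neg_mem (E.sub_mem habsf habsg)) E.zero_mem
  have hab : a ⊓ b = 0 := by
    have := posPart_inf_negPart_eq_zero (|f| - |g|)
    rwa [posPart_def, negPart_def] at this
  have habP : a ⊓ b ∈ P := by rw [hab]; exact P.zero_mem
  have ha0 : (0:C(K,ℝ)) ≤ a := le_sup_right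
  have hb0 : (0:C(K,ℝ)) ≤ b := le_sup_right
  rcases hP.2.2 a haE b hbE habP with haP | hbP
  · -- a ∈ P ⊆ Q₂, so |f| ≤ a + |g| gives f ∈ Q₂
    have hgabs : |g| ∈ Q₂ := h2.2 _ g habsg (by rw [abs_abs]) hgQ2
    have hsum : a + |g| ∈ Q₂ := Q₂.add_mem (hPQ2 haP) hgabs
    have hle : |f| ≤ a + |g| :=
      sub_le_iff_le_add.mp (le_sup_left : |f| - |g| ≤ a)
    have hle2 : |f| ≤ |(a + |g|)| := by
      rwa [abs_of_nonneg (add_nonneg ha0 (abs_nonneg g))]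
    exact hfQ2 (h2.2 f _ hfE hle2 hsum)
  · -- b ∈ P ⊆ Q₁, so |g| ≤ b + |f| gives g ∈ Q₁
    have hfabs : |f| ∈ Q₁ := h1.2 _ f habsf (by rw [abs_abs]) hfQ1
    have hsum : b + |f| ∈ Q₁ := Q₁.add_mem (hPQ1 hbP) hfabs
    have hle : |g| ≤ b + |f| := by
      have hx : |g| - |f| ≤ b := by
        rw [hb, neg_sub]
        exact le_sup_left
      exact sub_le_iff_le_add.mp hx
    have hle2 : |g| ≤ |(b + |f|)| := by
      rwa [abs_of_nonneg (add_nonneg hb0 (abs_nonneg f))]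
    exact hgQ1 (h1.2 g _ hgE hle2 hsum)

/-- Every prime ideal contains a minimal prime ideal (Zorn). -/
lemma exists_minimal_prime_le {P₀ : Submodule ℝ C(K, ℝ)}
    (hP₀ : IsPrimeIdealOn (E : Set C(K, ℝ)) P₀) :
    ∃ Q : Submodule ℝ C(K, ℝ), IsPrimeIdealOn (E : Set C(K, ℝ)) Q ∧ Q ≤ P₀ ∧
      ∀ R : Submodule ℝ C(K, ℝ), IsPrimeIdealOn (E : Set C(K, ℝ)) R → R ≤ Q → R = Q := by
  have hZ : ∀ c ⊆ {Q : (Submodule ℝ C(K, ℝ))ᵒᵈ |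
        IsPrimeIdealOn (E : Set C(K, ℝ)) (OrderDual.ofDual Q)},
      IsChain (· ≤ ·) c → ∀ y ∈ c, ∃ ub ∈ {Q : (Submodule ℝ C(K, ℝ))ᵒᵈ |
        IsPrimeIdealOn (E : Set C(K, ℝ)) (OrderDual.ofDual Q)}, ∀ z ∈ c, z ≤ ub := by
    intro c hcs hchain y hyc
    -- lower bound: sInf of the chain
    set Q : Submodule ℝ C(K, ℝ) := sInf (OrderDual.ofDual '' c) with hQ
    have hQle : ∀ z ∈ c, Q ≤ OrderDual.ofDual z := fun z hz =>
      sInf_le (Set.mem_image_of_mem _ hz)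
    have hmemQ : ∀ f : C(K,ℝ), f ∈ Q ↔ ∀ z ∈ c, f ∈ OrderDual.ofDual z := by
      intro f
      rw [hQ, Submodule.mem_sInf]
      constructor
      · intro h z hz; exact h _ (Set.mem_image_of_mem _ hz)
      · rintro h p ⟨z, hz, rfl⟩; exact h z hz
    refine ⟨OrderDual.toDual Q, ?_, fun z hz => hQle z hz⟩
    refine ⟨⟨fun f hf => (hcs hyc).1.1 (hQle y hyc hf), ?_⟩, ?_, ?_⟩
    · intro f g hfE hle hg
      exact (hmemQ f).mpr fun z hz => (hcs hz).1.2 f g hfE hle ((hmemQ g).mp hg z hz)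
    · intro hQE
      apply (hcs hyc).2.1
      refine Set.Subset.antisymm (hcs hyc).1.1 ?_
      rw [← hQE]
      exact hQle y hyc
    · intro f hf g hg hfg
      by_contra hcon
      push_neg at hcon
      obtain ⟨hfQ, hgQ⟩ := hcon
      rw [show (f ∈ OrderDual.ofDual (OrderDual.toDual Q)) = (f ∈ Q) from rfl, hmemQ] at hfQ
      rw [show (g ∈ OrderDual.ofDual (OrderDual.toDual Q)) = (g ∈ Q) from rfl, hmemQ] at hgQ
      push_neg at hfQ hgQ
      obtain ⟨z₁, hz₁, hfz₁⟩ := hfQ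
      obtain ⟨z₂, hz₂, hgz₂⟩ := hgQ
      have hcomp : OrderDual.ofDual z₁ ≤ OrderDual.ofDual z₂ ∨
          OrderDual.ofDual z₂ ≤ OrderDual.ofDual z₁ := by
        rcases eq_or_ne z₁ z₂ with rfl | hne
        · exact Or.inl le_rfl
        · rcases hchain hz₁ hz₂ hne with h | h
          · exact Or.inr h
          · exact Or.inl h
      rcases hcomp with h | h
      · rcases (hcs hz₁).2.2 f hf g hg (hmemQ _ |>.mp hfg z₁ hz₁) with h' | h'
        · exact hfz₁ h'
        · exact hgz₂ (h h')
      · rcases (hcs hz₂).2.2 f hf g hg (hmemQ _ |>.mp hfg z₂ hz₂) with h' | h'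
        · exact hfz₁ (h h')
        · exact hgz₂ h'
  obtain ⟨m, hle, hmem, hmax⟩ := zorn_le_nonempty₀ (α := (Submodule ℝ C(K, ℝ))ᵒᵈ)
    {Q : (Submodule ℝ C(K, ℝ))ᵒᵈ | IsPrimeIdealOn (E : Set C(K, ℝ)) (OrderDual.ofDual Q)}
    hZ (OrderDual.toDual P₀) hP₀
  exact ⟨OrderDual.ofDual m, hmem, hle, fun R hR hRm => le_antisymm hRm (hmax hR hRm)⟩

end Aux

theorem statement19 (K : Type*) [TopologicalSpace K] [CompactSpace K] [T2Space K]
    (E : Submodule ℝ C(K, ℝ))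
    (hsub : ∀ f g : C(K, ℝ), f ∈ E → g ∈ E → f ⊔ g ∈ E)
    (hdense : Dense (E : Set C(K, ℝ)))
    (hfin : {P : Submodule ℝ C(K, ℝ) |
        IsPrimeIdealOn (E : Set C(K, ℝ)) P ∧
        ∀ Q : Submodule ℝ C(K, ℝ),
          IsPrimeIdealOn (E : Set C(K, ℝ)) Q → Q ≤ P → Q = P}.Finite) :
    Finite K ∧ E = ⊤ := by
  have hKfin : Finite K := by
    have hchoice : ∀ x : K, ∃ Q : Submodule ℝ C(K, ℝ),
        IsPrimeIdealOn (E : Set C(K, ℝ)) Q ∧ Q ≤ vanishIdeal E x ∧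
        ∀ R : Submodule ℝ C(K, ℝ), IsPrimeIdealOn (E : Set C(K, ℝ)) R → R ≤ Q → R = Q :=
      fun x => exists_minimal_prime_le (vanishIdeal_prime hdense x)
    choose Q hQp hQle hQmin using hchoice
    haveI := hfin.to_subtype
    have hinj : Function.Injective (fun x : K =>
        (⟨Q x, hQp x, hQmin x⟩ : {P : Submodule ℝ C(K, ℝ) |
          IsPrimeIdealOn (E : Set C(K, ℝ)) P ∧
          ∀ Q' : Submodule ℝ C(K, ℝ),
            IsPrimeIdealOn (E : Set C(K, ℝ)) Q' → Q' ≤ P → Q' = P})) := by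
      intro x y hxyQ
      by_contra hxy
      have hQeq : Q x = Q y := congrArg Subtype.val hxyQ
      have hQley : Q x ≤ vanishIdeal E y := hQeq ▸ hQle y
      rcases ideals_comparable hsub (hQp x) (vanishIdeal_prime hdense x).1
        (vanishIdeal_prime hdense y).1 (hQle x) hQley with hc | hc
      · obtain ⟨h0, hmem, hnmem⟩ := exists_sep hsub hdense hxy
        exact hnmem (hc hmem)
      · obtain ⟨h0, hmem, hnmem⟩ := exists_sep hsub hdense (Ne.symm hxy)
        exact hnmem (hc hmem)
    exact Finite.of_injective _ hinj
  refine ⟨hKfin, ?_⟩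
  haveI := hKfin
  haveI : FiniteDimensional ℝ C(K, ℝ) :=
    FiniteDimensional.of_injective (ContinuousMap.coeFnLinearMap ℝ (M := ℝ) (α := K))
      DFunLike.coe_injective
  have hclosed : IsClosed (E : Set C(K, ℝ)) := Submodule.closed_of_finiteDimensional E
  have huniv : (E : Set C(K, ℝ)) = Set.univ := by
    rw [← hclosed.closure_eq, hdense.closure_eq]
  refine Submodule.eq_top_iff'.mpr fun f => ?_
  have : f ∈ (E : Set C(K, ℝ)) := huniv ▸ Set.mem_univ f
  exact this
end
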